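/- arXiv:2602.19452 — 10 statements merged into one kernel-verified Lean document; each statement's English description precedes it below -/
import Mathlib

section
/- Let z̃ = ζ·β^{e} be a positive real with β^{t-1} ≤ ζ ≤ β^t and E_min ≤ e < E_max. Then the element of Dekker's system closest to z̃ is either ⌊ζ⌋·β^e or ⌈ζ⌉·β^e. -/
/-!
Multiples `k * β ^ e` of an integer `k` lie either at or below `⌊ζ⌋ * β ^ e` or at or above
`⌈ζ⌉ * β ^ e`. Elements of Dekker's system with exponent `≥ e` are such multiples, and those with exponent
`< e` lie below `β ^ (t - 1) * β ^ e ≤ ⌊ζ⌋ * β ^ e` because their mantissa is below `β ^ t`.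
So no element of the system falls strictly between the two candidates, and the nearer of them wins.
-/

/-- Dekker's floating point number system as a set of reals. -/
def Dekker (β : ℤ) (t : ℕ) (Emin Emax : ℤ) : Set ℝ :=
  {x | ∃ m e : ℤ, |m| < β ^ t ∧ Emin ≤ e ∧ e ≤ Emax ∧ x = (m : ℝ) * (β : ℝ) ^ e}

theorem exists_mem_pair_forall_abs_sub_le {S : Set ℝ} {a b z : ℝ} (ha : a ≤ z) (hb : z ≤ b)
    (hS : ∀ w ∈ S, w ≤ a ∨ b ≤ w) :
    ∃ c ∈ ({a, b} : Set ℝ), ∀ w ∈ S, |c - z| ≤ |w - z| := by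
  rcases le_total (z - a) (b - z) with hnear | hnear
  · refine ⟨a, Or.inl rfl, fun w hw => ?_⟩
    rw [abs_sub_comm, abs_of_nonneg (sub_nonneg.mpr ha), le_abs]
    rcases hS w hw with hwa | hbw
    · right; linarith
    · left; linarith
  · refine ⟨b, Or.inr rfl, fun w hw => ?_⟩
    rw [abs_of_nonneg (sub_nonneg.mpr hb), le_abs]
    rcases hS w hw with hwa | hbw
    · right; linarith
    · left; linarith

theorem int_mul_le_floor_mul_or_ceil_mul_le (k : ℤ) (ζ : ℝ) {p : ℝ} (hp : 0 ≤ p) :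
    k * p ≤ ⌊ζ⌋ * p ∨ ⌈ζ⌉ * p ≤ k * p := by
  rcases le_or_gt (k : ℝ) ζ with hk | hk
  · exact Or.inl (mul_le_mul_of_nonneg_right (by exact_mod_cast Int.le_floor.mpr hk) hp)
  · exact Or.inr (mul_le_mul_of_nonneg_right (by exact_mod_cast Int.ceil_le.mpr hk.le) hp)

theorem exists_int_mul_zpow_eq_of_le {β : ℤ} (hβ : β ≠ 0) (m : ℤ) {e f : ℤ} (hef : e ≤ f) :
    ∃ k : ℤ, (m : ℝ) * (β : ℝ) ^ f = k * (β : ℝ) ^ e := by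
  obtain ⟨n, hn⟩ := Int.eq_ofNat_of_zero_le (sub_nonneg.mpr hef)
  refine ⟨m * β ^ n, ?_⟩
  rw [show f = n + e by omega, zpow_add₀ (by exact_mod_cast hβ), zpow_natCast]
  push_cast
  ring

theorem mul_zpow_le_of_lt_pow {β m : ℝ} (hβ : 1 ≤ β) {t : ℕ} (ht : 1 ≤ t) (hm : m < β ^ t)
    {e f : ℤ} (hfe : f < e) :
    m * β ^ f ≤ β ^ (t - 1) * β ^ e := by
  have hβ0 : β ≠ 0 := (zero_lt_one.trans_le hβ).ne'
  calc m * β ^ f ≤ β ^ t * β ^ f :=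
        mul_le_mul_of_nonneg_right hm.le (zpow_nonneg (zero_le_one.trans hβ) f)
    _ = β ^ ((t : ℤ) + f) := by rw [zpow_add₀ hβ0, zpow_natCast]
    _ ≤ β ^ (((t - 1 : ℕ) : ℤ) + e) := zpow_le_zpow_right₀ hβ (by omega)
    _ = β ^ (t - 1) * β ^ e := by rw [zpow_add₀ hβ0, zpow_natCast]

theorem Dekker.le_floor_mul_or_ceil_mul_le {β : ℤ} {t : ℕ} {Emin Emax : ℤ} (hβ : 1 ≤ β)
    (ht : 1 ≤ t) {ζ : ℝ} (hζ : (β : ℝ) ^ (t - 1) ≤ ζ) (e : ℤ) :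
    ∀ w ∈ Dekker β t Emin Emax, w ≤ ⌊ζ⌋ * (β : ℝ) ^ e ∨ ⌈ζ⌉ * (β : ℝ) ^ e ≤ w := by
  have hp : (0 : ℝ) ≤ (β : ℝ) ^ e := zpow_nonneg (by exact_mod_cast zero_le_one.trans hβ) e
  rintro w ⟨m, f, hm, -, -, rfl⟩
  rcases le_or_gt e f with hef | hfe
  · obtain ⟨k, hk⟩ := exists_int_mul_zpow_eq_of_le (show β ≠ 0 by omega) m hef
    rw [hk]
    exact int_mul_le_floor_mul_or_ceil_mul_le k ζ hp
  · have hfloor : (β : ℝ) ^ (t - 1) ≤ ⌊ζ⌋ := by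
      exact_mod_cast Int.le_floor.mpr (by exact_mod_cast hζ)
    refine Or.inl ((mul_zpow_le_of_lt_pow (by exact_mod_cast hβ) ht ?_ hfe).trans
      (mul_le_mul_of_nonneg_right hfloor hp))
    exact_mod_cast (le_abs_self m).trans_lt hm

theorem dekker_closest_floor_or_ceil_general
    (β : ℤ) (t : ℕ) (Emin Emax : ℤ) (hβ : 2 ≤ β) (ht : 1 ≤ t)
    (ζ : ℝ) (e : ℤ)
    (hζ1 : (β : ℝ) ^ (t - 1) ≤ ζ) :
    ∃ c ∈ ({(⌊ζ⌋ : ℝ) * (β : ℝ) ^ e, (⌈ζ⌉ : ℝ) * (β : ℝ) ^ e} : Set ℝ),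
      ∀ w ∈ Dekker β t Emin Emax, |c - ζ * (β : ℝ) ^ e| ≤ |w - ζ * (β : ℝ) ^ e| := by
  have hp : (0 : ℝ) ≤ (β : ℝ) ^ e := zpow_nonneg (by exact_mod_cast (by omega : (0 : ℤ) ≤ β)) e
  exact exists_mem_pair_forall_abs_sub_le
    (mul_le_mul_of_nonneg_right (Int.floor_le ζ) hp)
    (mul_le_mul_of_nonneg_right (Int.le_ceil ζ) hp)
    (Dekker.le_floor_mul_or_ceil_mul_le (by omega) ht hζ1 e)

/-- the closest element of Dekker's system to ζ·β^e is ⌊ζ⌋·β^e or ⌈ζ⌉·β^e. -/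
theorem dekker_closest_floor_or_ceil
    (β : ℤ) (t : ℕ) (Emin Emax : ℤ) (hβ : 2 ≤ β) (ht : 1 ≤ t)
    (ζ : ℝ) (e : ℤ)
    (hζ1 : (β : ℝ) ^ (t - 1) ≤ ζ) (hζ2 : ζ ≤ (β : ℝ) ^ t)
    (he1 : Emin ≤ e) (he2 : e < Emax) :
    ∃ c ∈ ({(⌊ζ⌋ : ℝ) * (β : ℝ) ^ e, (⌈ζ⌉ : ℝ) * (β : ℝ) ^ e} : Set ℝ),
      ∀ w ∈ Dekker β t Emin Emax, |c - ζ * (β : ℝ) ^ e| ≤ |w - ζ * (β : ℝ) ^ e| :=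
  dekker_closest_floor_or_ceil_general β t Emin Emax hβ ht ζ e hζ1
end

section
/- For x, y in Dekker's system admitting representations with e(x) ≥ e(y), and z = fl(x+y) under any rounding that maps elements of D to themselves (faithful rounding), z admits a representation in D with exponent at most e(x) + 1. -/
namespace Dekker

variable {β : ℤ} {t : ℕ} {Emin Emax : ℤ}

theorem abs_intCast_le_pow_sub_one {m : ℤ} (hm : |m| < β ^ t) :
    |(m : ℝ)| ≤ (β : ℝ) ^ t - 1 := by
  rw [← Int.cast_abs]
  exact_mod_cast Int.le_sub_one_of_lt hm

theorem pow_sub_one_mul_zpow_mem (hβ : 0 < β) {f : ℤ} (hf₁ : Emin ≤ f) (hf₂ : f ≤ Emax) :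
    ((β : ℝ) ^ t - 1) * (β : ℝ) ^ f ∈ Dekker β t Emin Emax := by
  have hpos : 0 < β ^ t := pow_pos hβ t
  refine ⟨β ^ t - 1, f, ?_, hf₁, hf₂, by push_cast; ring⟩
  rw [abs_of_nonneg (by omega)]
  omega

theorem abs_add_le_pow_sub_one_mul_zpow_succ (hβ : 2 ≤ β) {mx my ex ey : ℤ}
    (hmx : |mx| < β ^ t) (hmy : |my| < β ^ t) (hord : ey ≤ ex) :
    |(mx : ℝ) * (β : ℝ) ^ ex + (my : ℝ) * (β : ℝ) ^ ey| ≤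
      ((β : ℝ) ^ t - 1) * (β : ℝ) ^ (ex + 1) := by
  have hβR : (2 : ℝ) ≤ β := by exact_mod_cast hβ
  have hβpos : (0 : ℝ) < β := by linarith
  have hmxR := abs_intCast_le_pow_sub_one hmx
  have hmyR := abs_intCast_le_pow_sub_one hmy
  have hmant : 0 ≤ (β : ℝ) ^ t - 1 := (abs_nonneg _).trans hmxR
  have hxpos : (0 : ℝ) < (β : ℝ) ^ ex := zpow_pos hβpos ex
  have hyx : (β : ℝ) ^ ey ≤ (β : ℝ) ^ ex := zpow_le_zpow_right₀ (by linarith) hord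
  calc |(mx : ℝ) * (β : ℝ) ^ ex + (my : ℝ) * (β : ℝ) ^ ey|
      ≤ |(mx : ℝ)| * (β : ℝ) ^ ex + |(my : ℝ)| * (β : ℝ) ^ ey := by
        refine (abs_add_le _ _).trans_eq ?_
        rw [abs_mul, abs_mul, abs_of_pos hxpos, abs_of_pos (zpow_pos hβpos ey)]
    _ ≤ ((β : ℝ) ^ t - 1) * (β : ℝ) ^ ex + ((β : ℝ) ^ t - 1) * (β : ℝ) ^ ex := by
        gcongr
    _ = ((β : ℝ) ^ t - 1) * (β : ℝ) ^ ex * 2 := by ring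
    _ ≤ ((β : ℝ) ^ t - 1) * (β : ℝ) ^ ex * β := by gcongr
    _ = ((β : ℝ) ^ t - 1) * (β : ℝ) ^ (ex + 1) := by
        rw [zpow_add_one₀ hβpos.ne', mul_assoc]

theorem exists_repr_exponent_le (hβ : 0 < β) {z : ℝ} (hz : z ∈ Dekker β t Emin Emax) {f : ℤ}
    (hf₁ : Emin ≤ f) (hf₂ : f ≤ Emax) (hbound : |z| < (β : ℝ) ^ t * (β : ℝ) ^ f) :
    ∃ m e : ℤ, |m| < β ^ t ∧ Emin ≤ e ∧ e ≤ Emax ∧ e ≤ f ∧ z = (m : ℝ) * (β : ℝ) ^ e := by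
  obtain ⟨m, e, hm, he₁, he₂, rfl⟩ := hz
  by_cases hef : e ≤ f
  · exact ⟨m, e, hm, he₁, he₂, hef, rfl⟩
  have hβR : (0 : ℝ) < β := by exact_mod_cast hβ
  have hfpos : (0 : ℝ) < (β : ℝ) ^ f := zpow_pos hβR f
  have hrescale : (m : ℝ) * (β : ℝ) ^ e = ((m * β ^ (e - f).toNat : ℤ) : ℝ) * (β : ℝ) ^ f := by
    push_cast
    rw [mul_assoc, ← zpow_natCast, ← zpow_add₀ hβR.ne', Int.toNat_of_nonneg (by omega)]
    ring_nf
  refine ⟨m * β ^ (e - f).toNat, f, ?_, hf₁, hf₂, le_rfl, hrescale⟩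
  rw [hrescale, abs_mul, abs_of_pos hfpos] at hbound
  have := lt_of_mul_lt_mul_right hbound hfpos.le
  rw [← Int.cast_abs] at this
  exact_mod_cast this

end Dekker

open Dekker in
theorem dekker_sum_exponent_bound_general
    (β : ℤ) (t : ℕ) (Emin Emax : ℤ) (hβ : 2 ≤ β)
    (fl : ℝ → ℝ)
    (hmem : ∀ x, fl x ∈ Dekker β t Emin Emax)
    (hfaithful : ∀ w ∈ Dekker β t Emin Emax, fl w = w)
    (hmono : ∀ a b : ℝ, |a| ≤ |b| → |fl a| ≤ |fl b|)
    (mx ex my ey : ℤ)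
    (hmx : |mx| < β ^ t) (hex1 : Emin ≤ ex)
    (hmy : |my| < β ^ t)
    (hord : ey ≤ ex) :
    ∃ m e : ℤ, |m| < β ^ t ∧ Emin ≤ e ∧ e ≤ Emax ∧ e ≤ ex + 1 ∧
      fl ((mx : ℝ) * (β : ℝ) ^ ex + (my : ℝ) * (β : ℝ) ^ ey) = (m : ℝ) * (β : ℝ) ^ e := by
  set s := (mx : ℝ) * (β : ℝ) ^ ex + (my : ℝ) * (β : ℝ) ^ ey
  by_cases hsucc : ex + 1 ≤ Emax
  · set w := ((β : ℝ) ^ t - 1) * (β : ℝ) ^ (ex + 1)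
    have hw : w ∈ Dekker β t Emin Emax := pow_sub_one_mul_zpow_mem (by omega) (by omega) hsucc
    have hsw : |s| ≤ w := abs_add_le_pow_sub_one_mul_zpow_succ hβ hmx hmy hord
    have hfl : |fl s| ≤ w := by
      simpa only [hfaithful w hw, abs_of_nonneg ((abs_nonneg s).trans hsw)] using
        hmono s w (hsw.trans (le_abs_self w))
    refine exists_repr_exponent_le (by omega) (hmem s) (by omega) hsucc (hfl.trans_lt ?_)
    have : (0 : ℝ) < (β : ℝ) ^ (ex + 1) := zpow_pos (by exact_mod_cast (by omega : 0 < β)) _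
    linarith
  · obtain ⟨m, e, hm, he₁, he₂, hz⟩ := hmem s
    exact ⟨m, e, hm, he₁, he₂, by omega, hz⟩

/-- z = fl(x+y) admits a representation with exponent at most e(x) + 1. -/
theorem dekker_sum_exponent_bound
    (β : ℤ) (t : ℕ) (Emin Emax : ℤ) (hβ : 2 ≤ β) (ht : 1 ≤ t)
    (fl : ℝ → ℝ)
    (hmem : ∀ x, fl x ∈ Dekker β t Emin Emax)
    (hfaithful : ∀ w ∈ Dekker β t Emin Emax, fl w = w)
    (hmono : ∀ a b : ℝ, |a| ≤ |b| → |fl a| ≤ |fl b|)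
    (mx ex my ey : ℤ)
    (hmx : |mx| < β ^ t) (hex1 : Emin ≤ ex) (hex2 : ex ≤ Emax)
    (hmy : |my| < β ^ t) (hey1 : Emin ≤ ey) (hey2 : ey ≤ Emax)
    (hord : ey ≤ ex) :
    ∃ m e : ℤ, |m| < β ^ t ∧ Emin ≤ e ∧ e ≤ Emax ∧ e ≤ ex + 1 ∧
      fl ((mx : ℝ) * (β : ℝ) ^ ex + (my : ℝ) * (β : ℝ) ^ ey) = (m : ℝ) * (β : ℝ) ^ e :=
  dekker_sum_exponent_bound_general β t Emin Emax hβ fl hmem hfaithful hmono mx ex my ey hmx hex1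
    hmy hord
end

section
/- Let x, y ∈ D admit representations m(x)·β^{e(x)} and m(y)·β^{e(y)}, let z = fl(x+y) with no overflow, and suppose z admits a representation with exponent e(z) ≤ min(e(x), e(y)). Then z = x + y exactly. -/
/-- fl is a faithful rounding into D: fl x is the largest element of D not exceeding x
or the smallest element of D not less than x. -/
def Faithful (D : Set ℝ) (fl : ℝ → ℝ) : Prop :=
  ∀ x : ℝ, fl x ∈ D ∧
    ((fl x ≤ x ∧ ∀ a ∈ D, a ≤ x → a ≤ fl x) ∨ (x ≤ fl x ∧ ∀ a ∈ D, x ≤ a → fl x ≤ a))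

/-!
With `u = β ^ e(z)`, both `x + y = n * u` and `fl (x + y) = m * u` lie on the grid `uℤ`, since
`e(z) ≤ e(x), e(y)`. If `m ≠ n`, the grid point `(m ± 1) * u` one step from `fl (x + y)` towards
`x + y` lies between them, so it is bounded by the no-overflow bound; as `|m ± 1| ≤ β ^ t` it is
then in `D` (after renormalising `±β ^ t` to exponent `e(z) + 1`), contradicting faithfulness.
-/

theorem exists_intCast_mul_zpow_eq {β : ℤ} (hβ : β ≠ 0) (m : ℤ) {e e' : ℤ} (he : e ≤ e') :
    ∃ j : ℤ, (m : ℝ) * (β : ℝ) ^ e' = j * (β : ℝ) ^ e := by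
  lift e' - e to ℕ using sub_nonneg.mpr he with d hd
  refine ⟨m * β ^ d, ?_⟩
  rw [show e' = d + e by omega, zpow_add₀ (Int.cast_ne_zero.mpr hβ), zpow_natCast]
  push_cast
  ring

namespace Dekker

variable {β : ℤ} {t : ℕ} {Emin Emax : ℤ}

theorem abs_le_of_mem (hβ : 1 ≤ β) {x : ℝ} (hx : x ∈ Dekker β t Emin Emax) :
    |x| ≤ ((β ^ t - 1 : ℤ) : ℝ) * (β : ℝ) ^ Emax := by
  obtain ⟨m, e, hm, -, he, rfl⟩ := hx
  have hβR : (1 : ℝ) ≤ β := by exact_mod_cast hβ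
  rw [abs_mul, abs_of_pos (zpow_pos (by linarith : (0 : ℝ) < β) e), ← Int.cast_abs]
  have hm' : |m| ≤ β ^ t - 1 := Int.le_sub_one_of_lt hm
  gcongr
  · exact_mod_cast (abs_nonneg m).trans hm'

theorem intCast_mul_zpow_mem (hβ : 2 ≤ β) (ht : 1 ≤ t) {k e : ℤ} (hk : |k| ≤ β ^ t)
    (he₁ : Emin ≤ e) (he₂ : e ≤ Emax)
    (hov : |(k : ℝ) * (β : ℝ) ^ e| ≤ ((β ^ t - 1 : ℤ) : ℝ) * (β : ℝ) ^ Emax) :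
    (k : ℝ) * (β : ℝ) ^ e ∈ Dekker β t Emin Emax := by
  rcases hk.lt_or_eq with hk | hk
  · exact ⟨k, e, hk, he₁, he₂, rfl⟩
  have hβR : (0 : ℝ) < β := by exact_mod_cast (by omega : (0 : ℤ) < β)
  have he : e < Emax := by
    refine lt_of_le_of_ne he₂ fun hEmax => ?_
    rw [hEmax, abs_mul, abs_of_pos (zpow_pos hβR _), ← Int.cast_abs, hk] at hov
    have := le_of_mul_le_mul_right hov (zpow_pos hβR _)
    push_cast at this
    linarith
  obtain ⟨j, rfl⟩ : β ∣ k := (dvd_abs _ _).mp (hk ▸ dvd_pow_self β (by omega))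
  have hj : |j| < β ^ t := by
    rw [abs_mul, abs_of_pos (by omega : (0 : ℤ) < β)] at hk
    nlinarith [abs_nonneg j, pow_pos (by omega : (0 : ℤ) < β) t]
  refine ⟨j, e + 1, hj, by omega, by omega, ?_⟩
  rw [zpow_add_one₀ hβR.ne']
  push_cast
  ring

end Dekker

theorem Faithful.eq_self_of_neighbours_mem {D : Set ℝ} {fl : ℝ → ℝ} (hfl : Faithful D fl)
    {u x : ℝ} (hu : 0 < u) {m n : ℤ} (hx : x = n * u) (hflx : fl x = m * u)
    (hD : ∀ k : ℤ, |k - m| ≤ 1 → (k : ℝ) * u ∈ Set.uIcc (fl x) x → (k : ℝ) * u ∈ D) :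
    fl x = x := by
  have hle_iff : ∀ a b : ℤ, (a : ℝ) * u ≤ b * u ↔ a ≤ b := fun a b =>
    (mul_le_mul_iff_of_pos_right hu).trans Int.cast_le
  suffices m = n by rw [hflx, hx, this]
  have hround := (hfl x).2
  rw [hflx, hx] at hround hD
  rcases hround with ⟨hle, hmax⟩ | ⟨hge, hmin⟩
  · have hmn := (hle_iff m n).mp hle
    by_contra hne
    have hk : ((m + 1 : ℤ) : ℝ) * u ≤ n * u := (hle_iff _ _).mpr (by omega)
    have hmem := hD (m + 1) (by simp)
      (Set.mem_uIcc.mpr (Or.inl ⟨(hle_iff _ _).mpr (by omega), hk⟩))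
    have := (hle_iff _ _).mp (hmax _ hmem hk)
    omega
  · have hnm := (hle_iff n m).mp hge
    by_contra hne
    have hk : (n : ℝ) * u ≤ ((m - 1 : ℤ) : ℝ) * u := (hle_iff _ _).mpr (by omega)
    have hmem := hD (m - 1) (by simp)
      (Set.mem_uIcc.mpr (Or.inr ⟨hk, (hle_iff _ _).mpr (by omega)⟩))
    have := (hle_iff _ _).mp (hmin _ hmem hk)
    omega

theorem dekker_small_exponent_addition_exact_general
    (β : ℤ) (t : ℕ) (Emin Emax : ℤ) (hβ : 2 ≤ β) (ht : 1 ≤ t)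
    (fl : ℝ → ℝ) (hfl : Faithful (Dekker β t Emin Emax) fl)
    (mx ex my ey : ℤ)
    (x y : ℝ) (hx : x = (mx : ℝ) * (β : ℝ) ^ ex) (hy : y = (my : ℝ) * (β : ℝ) ^ ey)
    (hov : |x + y| ≤ ((β ^ t - 1 : ℤ) : ℝ) * (β : ℝ) ^ Emax)
    (mz ez : ℤ) (hmz : |mz| < β ^ t) (hez1 : Emin ≤ ez) (hez2 : ez ≤ Emax)
    (hz : fl (x + y) = (mz : ℝ) * (β : ℝ) ^ ez)
    (hezx : ez ≤ ex) (hezy : ez ≤ ey) :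
    fl (x + y) = x + y := by
  obtain ⟨jx, hjx⟩ := exists_intCast_mul_zpow_eq (by omega : β ≠ 0) mx hezx
  obtain ⟨jy, hjy⟩ := exists_intCast_mul_zpow_eq (by omega : β ≠ 0) my hezy
  have hsum : x + y = ((jx + jy : ℤ) : ℝ) * (β : ℝ) ^ ez := by
    rw [hx, hy, hjx, hjy]; push_cast; ring
  have hβR : (0 : ℝ) < β := by exact_mod_cast (by omega : (0 : ℤ) < β)
  refine hfl.eq_self_of_neighbours_mem (zpow_pos hβR ez) hsum hz fun k hk hbetween => ?_
  have hfl_bound := Dekker.abs_le_of_mem (by omega) (hfl (x + y)).1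
  refine Dekker.intCast_mul_zpow_mem hβ ht ?_ hez1 hez2 ?_
  · have := abs_add_le (k - mz) mz
    rw [sub_add_cancel] at this
    omega
  · rcases Set.mem_uIcc.mp hbetween with h | h
    · exact (abs_le_max_abs_abs h.1 h.2).trans (max_le hfl_bound hov)
    · exact (abs_le_max_abs_abs h.1 h.2).trans (max_le hov hfl_bound)

/-- if the rounded sum admits a representation with exponent
at most min(e(x), e(y)), the addition is exact. -/
theorem dekker_small_exponent_addition_exact
    (β : ℤ) (t : ℕ) (Emin Emax : ℤ) (hβ : 2 ≤ β) (ht : 1 ≤ t)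
    (fl : ℝ → ℝ) (hfl : Faithful (Dekker β t Emin Emax) fl)
    (mx ex my ey : ℤ)
    (hmx : |mx| < β ^ t) (hex1 : Emin ≤ ex) (hex2 : ex ≤ Emax)
    (hmy : |my| < β ^ t) (hey1 : Emin ≤ ey) (hey2 : ey ≤ Emax)
    (x y : ℝ) (hx : x = (mx : ℝ) * (β : ℝ) ^ ex) (hy : y = (my : ℝ) * (β : ℝ) ^ ey)
    (hov : |x + y| ≤ ((β ^ t - 1 : ℤ) : ℝ) * (β : ℝ) ^ Emax)
    (mz ez : ℤ) (hmz : |mz| < β ^ t) (hez1 : Emin ≤ ez) (hez2 : ez ≤ Emax)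
    (hz : fl (x + y) = (mz : ℝ) * (β : ℝ) ^ ez)
    (hezx : ez ≤ ex) (hezy : ez ≤ ey) :
    fl (x + y) = x + y :=
  dekker_small_exponent_addition_exact_general β t Emin Emax hβ ht fl hfl mx ex my ey x y hx hy hov
    mz ez hmz hez1 hez2 hz hezx hezy
end

section
/- (3op EFT over addition) Let x, y ∈ D with base β = 2 admit representations such that e(x) ≥ e(y), and assume nearest rounding. Define z = fl(x+y), w = fl(z−x), zz = fl(y−w). Then w = z − x and zz = y − w exactly, and consequently z + zz = x + y. -/
/-!
Write `u = 2 ^ ey`. The numbers `x`, `y` and `x + y` lie on the grid `u ℤ`, and nearest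
rounding maps `u ℤ` into itself: a grid point of modulus `< 2 ^ t u` is representable, and a
larger one rounds to something of modulus `≥ (2 ^ t - 1) u`, which is again a multiple of `u`.
So the rounding error `r = x + y - z` is a grid point with `|r| ≤ |y|` (`x` itself is a
candidate), hence representable.

For `z - x = y - r` the same argument works unless `|z - x| ≥ 2 ^ t u`. Then `x + y` is neither
representable nor beyond the overflow threshold, so it lies in a binade
`[2 ^ t 2 ^ F, 2 ^ t 2 ^ (F + 1))` with `ey ≤ F ≤ ex`. There `|r| ≤ 2 ^ F`, and both `z` and `x`
are multiples of `2 ^ F`, so `z - x` is a multiple of `2 ^ F` of modulus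
`≤ 2 ^ F + (2 ^ t - 1) 2 ^ F = 2 ^ t 2 ^ F`, representable with exponent `F` or `F + 1`.
-/

open AddSubgroup

theorem two_pow_sub_one_nonneg (t : ℕ) : (0 : ℝ) ≤ 2 ^ t - 1 :=
  sub_nonneg.mpr (one_le_pow₀ one_le_two)

theorem zpow_mem_zmultiples_zpow {e E : ℤ} (h : E ≤ e) :
    (2 : ℝ) ^ e ∈ zmultiples ((2 : ℝ) ^ E) := by
  obtain ⟨n, rfl⟩ := Int.le.dest h
  refine mem_zmultiples_iff.mpr ⟨2 ^ n, ?_⟩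
  rw [zsmul_eq_mul, zpow_add₀ two_ne_zero, zpow_natCast]
  push_cast
  ring

theorem int_mul_zpow_mem_zmultiples (m : ℤ) {e E : ℤ} (h : E ≤ e) :
    (m : ℝ) * 2 ^ e ∈ zmultiples ((2 : ℝ) ^ E) := by
  rw [← zsmul_eq_mul]
  exact zsmul_mem (zpow_mem_zmultiples_zpow h) m

theorem exists_two_pow_mul_zpow_le_lt {s : ℝ} (hs : 0 < s) (t : ℕ) :
    ∃ F : ℤ, 2 ^ t * 2 ^ F ≤ s ∧ s < 2 ^ t * 2 ^ (F + 1) := by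
  obtain ⟨F, hF₁, hF₂⟩ := exists_mem_Ico_zpow (div_pos hs (by positivity : (0 : ℝ) < 2 ^ t))
    one_lt_two
  rw [le_div_iff₀ (by positivity), mul_comm] at hF₁
  rw [div_lt_iff₀ (by positivity), mul_comm] at hF₂
  exact ⟨F, hF₁, hF₂⟩

theorem le_of_two_pow_mul_zpow_le_abs_add {t : ℕ} {x y : ℝ} {ex ey F : ℤ}
    (hx : |x| ≤ (2 ^ t - 1) * 2 ^ ex) (hy : |y| ≤ (2 ^ t - 1) * 2 ^ ey) (hord : ey ≤ ex)
    (hF : 2 ^ t * 2 ^ F ≤ |x + y|) : F ≤ ex := by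
  by_contra! h
  have h1 := mul_le_mul_of_nonneg_left (zpow_le_zpow_right₀ one_le_two (by omega : ex ≤ F - 1) :
    (2 : ℝ) ^ ex ≤ 2 ^ (F - 1)) (two_pow_sub_one_nonneg t)
  have h2 := mul_le_mul_of_nonneg_left (zpow_le_zpow_right₀ one_le_two (by omega : ey ≤ F - 1) :
    (2 : ℝ) ^ ey ≤ 2 ^ (F - 1)) (two_pow_sub_one_nonneg t)
  rw [show F = F - 1 + 1 by ring, zpow_add_one₀ two_ne_zero] at hF
  linarith [abs_add_le x y, zpow_pos (two_pos : (0 : ℝ) < 2) (F - 1)]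

section Dekker

variable {t : ℕ} {Emin Emax : ℤ}

theorem int_mul_zpow_mem_dekker {m e : ℤ} (hm : |m| < 2 ^ t) (he₁ : Emin ≤ e) (he₂ : e ≤ Emax) :
    (m : ℝ) * 2 ^ e ∈ Dekker 2 t Emin Emax :=
  ⟨m, e, hm, he₁, he₂, by norm_num⟩

theorem neg_mem_dekker {a : ℝ} (ha : a ∈ Dekker 2 t Emin Emax) : -a ∈ Dekker 2 t Emin Emax := by
  obtain ⟨m, e, hm, he₁, he₂, rfl⟩ := ha
  exact ⟨-m, e, by rwa [abs_neg], he₁, he₂, by push_cast; ring⟩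

theorem abs_int_mul_zpow_le {m : ℤ} (hm : |m| < 2 ^ t) (e : ℤ) :
    |(m : ℝ) * 2 ^ e| ≤ (2 ^ t - 1) * 2 ^ e := by
  have hm' : ((|m| : ℤ) : ℝ) ≤ 2 ^ t - 1 := by exact_mod_cast Int.le_sub_one_of_lt hm
  rw [abs_mul, abs_of_pos (zpow_pos (two_pos : (0 : ℝ) < 2) e), ← Int.cast_abs]
  exact mul_le_mul_of_nonneg_right hm' (zpow_pos two_pos e).le

theorem abs_le_of_mem_dekker {a : ℝ} (ha : a ∈ Dekker 2 t Emin Emax) :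
    |a| ≤ (2 ^ t - 1) * 2 ^ Emax := by
  obtain ⟨m, e, hm, -, he, rfl⟩ := ha
  push_cast
  exact (abs_int_mul_zpow_le hm e).trans
    (mul_le_mul_of_nonneg_left (zpow_le_zpow_right₀ one_le_two he) (two_pow_sub_one_nonneg t))

theorem mem_dekker_of_mem_zmultiples {a : ℝ} {e : ℤ} (ha : a ∈ zmultiples ((2 : ℝ) ^ e))
    (hlt : |a| < 2 ^ t * 2 ^ e) (he₁ : Emin ≤ e) (he₂ : e ≤ Emax) : a ∈ Dekker 2 t Emin Emax := by
  obtain ⟨k, rfl⟩ := mem_zmultiples_iff.mp ha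
  rw [zsmul_eq_mul, abs_mul, abs_of_pos (zpow_pos (two_pos : (0 : ℝ) < 2) e)] at hlt
  rw [zsmul_eq_mul]
  refine int_mul_zpow_mem_dekker ?_ he₁ he₂
  exact_mod_cast lt_of_mul_lt_mul_right hlt (zpow_pos two_pos e).le

theorem mem_dekker_of_mem_zmultiples_of_abs_le (ht : 1 ≤ t) {a : ℝ} {e : ℤ}
    (ha : a ∈ zmultiples ((2 : ℝ) ^ e)) (hle : |a| ≤ 2 ^ t * 2 ^ e) (he₁ : Emin ≤ e)
    (he₂ : e < Emax) : a ∈ Dekker 2 t Emin Emax := by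
  rcases hle.lt_or_eq with hlt | heq
  · exact mem_dekker_of_mem_zmultiples ha hlt he₁ he₂.le
  have hshift : (2 : ℝ) ^ t * 2 ^ e = ((2 ^ (t - 1) : ℤ) : ℝ) * 2 ^ (e + 1) := by
    obtain ⟨s, rfl⟩ := Nat.exists_eq_add_of_le' ht
    push_cast
    rw [zpow_add_one₀ two_ne_zero, pow_succ]
    ring
  have htop : (2 : ℝ) ^ t * 2 ^ e ∈ Dekker 2 t Emin Emax := by
    rw [hshift]
    refine int_mul_zpow_mem_dekker ?_ (by omega) he₂
    rw [abs_of_pos (by positivity)]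
    exact pow_lt_pow_right₀ one_lt_two (by omega)
  rcases (abs_eq (by positivity)).mp heq with rfl | rfl
  exacts [htop, neg_mem_dekker htop]

theorem mem_zmultiples_of_mem_dekker {a : ℝ} (ha : a ∈ Dekker 2 t Emin Emax) {E : ℤ}
    (hlt : (2 ^ t - 1) * 2 ^ (E - 1) < |a|) : a ∈ zmultiples ((2 : ℝ) ^ E) := by
  obtain ⟨m, e, hm, -, -, rfl⟩ := ha
  push_cast at hlt ⊢
  by_cases hE : E ≤ e
  · exact int_mul_zpow_mem_zmultiples m hE
  have hpow : (2 : ℝ) ^ e ≤ 2 ^ (E - 1) := zpow_le_zpow_right₀ one_le_two (by omega)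
  have := abs_int_mul_zpow_le hm e
  have := mul_le_mul_of_nonneg_left hpow (two_pow_sub_one_nonneg t)
  linarith

theorem two_pow_sub_one_mul_zpow_mem_dekker {e : ℤ} (he₁ : Emin ≤ e) (he₂ : e ≤ Emax) :
    ((2 : ℝ) ^ t - 1) * 2 ^ e ∈ Dekker 2 t Emin Emax := by
  have h := int_mul_zpow_mem_dekker (t := t) (m := 2 ^ t - 1) (by
    rw [abs_of_nonneg (by exact_mod_cast two_pow_sub_one_nonneg t)]; omega) he₁ he₂
  push_cast at h
  exact h

end Dekker

section Rounding

variable {D : Set ℝ} {fl : ℝ → ℝ}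

theorem round_eq_self_of_mem (hnear : ∀ v, ∀ a ∈ D, |fl v - v| ≤ |a - v|) {a : ℝ} (ha : a ∈ D) :
    fl a = a := by
  simpa [sub_eq_zero] using hnear a a ha

theorem abs_round_sub_le_of_abs_le (hnear : ∀ v, ∀ a ∈ D, |fl v - v| ≤ |a - v|) {a v : ℝ}
    (ha : a ∈ D) (ha' : -a ∈ D) (hav : |a| ≤ |v|) : |fl v - v| ≤ |v| - |a| := by
  have habs : |a| ∈ D ∧ -|a| ∈ D := by
    rcases abs_choice a with h | h <;> rw [h] <;> simp [ha, ha']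
  rcases le_total 0 v with hv | hv
  · rw [abs_of_nonneg hv] at hav ⊢
    refine (hnear v _ habs.1).trans (le_of_eq ?_)
    rw [abs_of_nonpos (by linarith)]
    ring
  · rw [abs_of_nonpos hv] at hav ⊢
    refine (hnear v _ habs.2).trans (le_of_eq ?_)
    rw [abs_of_nonneg (by linarith)]
    ring

end Rounding

section NearestDekker

variable {t : ℕ} {Emin Emax : ℤ} {fl : ℝ → ℝ}

theorem abs_round_sub_le_zpow (ht : 1 ≤ t)
    (hnear : ∀ v, ∀ a ∈ Dekker 2 t Emin Emax, |fl v - v| ≤ |a - v|) {v : ℝ} {E : ℤ}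
    (hE₁ : Emin ≤ E) (hE₂ : E ≤ Emax) (hv : |v| ≤ 2 ^ t * 2 ^ E)
    (hvmax : |v| ≤ (2 ^ t - 1) * 2 ^ Emax) : |fl v - v| ≤ 2 ^ E / 2 := by
  have hpos : (0 : ℝ) < 2 ^ E := zpow_pos two_pos E
  set q := round (v / 2 ^ E)
  have hround : |v / 2 ^ E - q| ≤ 1 / 2 := abs_sub_round _
  have hq : |(q : ℝ)| ≤ |v| / 2 ^ E + 1 / 2 := by
    have h := abs_sub_abs_le_abs_sub (q : ℝ) (v / 2 ^ E)
    rw [abs_sub_comm, abs_div, abs_of_pos hpos] at h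
    linarith
  have hdist : |q * 2 ^ E - v| ≤ 2 ^ E / 2 := by
    have : (q : ℝ) * 2 ^ E - v = -(v / 2 ^ E - q) * 2 ^ E := by field_simp; ring
    rw [this, abs_mul, abs_neg, abs_of_pos hpos]
    nlinarith
  refine (hnear v _ ?_).trans hdist
  rcases hE₂.lt_or_eq with hlt | rfl
  · refine mem_dekker_of_mem_zmultiples_of_abs_le ht (int_mul_zpow_mem_zmultiples q le_rfl) ?_
      hE₁ hlt
    rw [abs_mul, abs_of_pos hpos]
    refine mul_le_mul_of_nonneg_right ?_ hpos.le
    have : |q| < 2 ^ t + 1 := by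
      have : |v| / 2 ^ E ≤ 2 ^ t := (div_le_iff₀ hpos).mpr hv
      exact_mod_cast (show ((|q| : ℤ) : ℝ) < 2 ^ t + 1 by push_cast; linarith)
    exact_mod_cast Int.lt_add_one_iff.mp this
  · refine int_mul_zpow_mem_dekker ?_ hE₁ le_rfl
    have : |v| / 2 ^ E ≤ 2 ^ t - 1 := (div_le_iff₀ hpos).mpr hvmax
    exact_mod_cast (show ((|q| : ℤ) : ℝ) < 2 ^ t by push_cast; linarith)

theorem abs_round_sub_le_of_max_lt (hmem : ∀ v, fl v ∈ Dekker 2 t Emin Emax)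
    (hnear : ∀ v, ∀ a ∈ Dekker 2 t Emin Emax, |fl v - v| ≤ |a - v|) (hE : Emin ≤ Emax) {v x : ℝ}
    (hv : (2 ^ t - 1) * 2 ^ Emax < |v|) (hx : x ∈ Dekker 2 t Emin Emax) :
    |fl v - x| ≤ |v - x| := by
  have hmaxD := two_pow_sub_one_mul_zpow_mem_dekker (t := t) hE le_rfl
  have hmax : 0 ≤ ((2 : ℝ) ^ t - 1) * 2 ^ Emax :=
    mul_nonneg (two_pow_sub_one_nonneg t) (zpow_pos two_pos _).le
  have herr := abs_round_sub_le_of_abs_le (v := v) hnear hmaxD (neg_mem_dekker hmaxD)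
    (by rw [abs_of_nonneg hmax]; exact hv.le)
  rw [abs_of_nonneg hmax] at herr
  have hz := abs_le_of_mem_dekker (hmem v)
  have hx := abs_le_of_mem_dekker hx
  rw [abs_le] at hz hx
  rcases le_total 0 v with h | h
  · rw [abs_of_nonneg h] at herr hv
    rw [abs_le] at herr
    rw [abs_of_nonneg (a := fl v - x) (by linarith), abs_of_nonneg (a := v - x) (by linarith)]
    linarith
  · rw [abs_of_nonpos h] at herr hv
    rw [abs_le] at herr
    rw [abs_of_nonpos (a := fl v - x) (by linarith), abs_of_nonpos (a := v - x) (by linarith)]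
    linarith

theorem round_mem_zmultiples (ht : 1 ≤ t) (hmem : ∀ v, fl v ∈ Dekker 2 t Emin Emax)
    (hnear : ∀ v, ∀ a ∈ Dekker 2 t Emin Emax, |fl v - v| ≤ |a - v|) {v : ℝ} {e : ℤ}
    (hv : v ∈ zmultiples ((2 : ℝ) ^ e)) (he₁ : Emin ≤ e) (he₂ : e ≤ Emax) :
    fl v ∈ zmultiples ((2 : ℝ) ^ e) := by
  by_cases hsmall : |v| < 2 ^ t * 2 ^ e
  · rwa [round_eq_self_of_mem hnear (mem_dekker_of_mem_zmultiples hv hsmall he₁ he₂)]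
  rw [not_lt] at hsmall
  have hpos : (0 : ℝ) < 2 ^ e := zpow_pos two_pos e
  have ht2 : (2 : ℝ) ≤ 2 ^ t := le_self_pow₀ one_le_two (by omega)
  have haD := two_pow_sub_one_mul_zpow_mem_dekker (t := t) he₁ he₂
  have ha : |((2 : ℝ) ^ t - 1) * 2 ^ e| = (2 ^ t - 1) * 2 ^ e :=
    abs_of_pos (mul_pos (by linarith) hpos)
  have herr := abs_round_sub_le_of_abs_le (v := v) hnear haD (neg_mem_dekker haD)
    (by rw [ha]; nlinarith)
  refine mem_zmultiples_of_mem_dekker (hmem v) ?_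
  rw [zpow_sub_one₀ two_ne_zero]
  have := abs_sub_abs_le_abs_sub v (fl v)
  rw [abs_sub_comm, ha] at herr
  nlinarith

theorem round_add_sub_mem_dekker_of_binade (ht : 1 ≤ t) (hmem : ∀ v, fl v ∈ Dekker 2 t Emin Emax)
    (hnear : ∀ v, ∀ a ∈ Dekker 2 t Emin Emax, |fl v - v| ≤ |a - v|) {x y : ℝ} {F : ℤ}
    (hF₁ : Emin ≤ F) (hF₂ : F < Emax) (hx : x ∈ zmultiples ((2 : ℝ) ^ F))
    (hy : |y| ≤ (2 ^ t - 1) * 2 ^ F) (hlow : 2 ^ t * 2 ^ F ≤ |x + y|)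
    (hhigh : |x + y| ≤ 2 ^ t * 2 ^ (F + 1)) (hmax : |x + y| ≤ (2 ^ t - 1) * 2 ^ Emax) :
    fl (x + y) - x ∈ Dekker 2 t Emin Emax := by
  have hpow : (2 : ℝ) ^ (F + 1) = 2 * 2 ^ F := by rw [zpow_add_one₀ two_ne_zero]; ring
  have herr : |fl (x + y) - (x + y)| ≤ 2 ^ F := by
    have := abs_round_sub_le_zpow ht hnear (by omega) (by omega) hhigh hmax
    rwa [hpow, mul_div_cancel_left₀ _ two_ne_zero] at this
  have hz : fl (x + y) ∈ zmultiples ((2 : ℝ) ^ F) := by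
    refine mem_zmultiples_of_mem_dekker (hmem _) ?_
    have := abs_sub_abs_le_abs_sub (x + y) (fl (x + y))
    rw [abs_sub_comm] at this
    have : (2 : ℝ) ^ (F - 1) < 2 ^ F := zpow_lt_zpow_right₀ one_lt_two (by omega)
    have : (1 : ℝ) ≤ 2 ^ t - 1 := by linarith [le_self_pow₀ (M₀ := ℝ) one_le_two (by omega : t ≠ 0)]
    nlinarith
  refine mem_dekker_of_mem_zmultiples_of_abs_le ht (sub_mem hz hx) ?_ hF₁ hF₂
  calc |fl (x + y) - x| = |(fl (x + y) - (x + y)) + y| := by ring_nf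
    _ ≤ |fl (x + y) - (x + y)| + |y| := abs_add_le _ _
    _ ≤ 2 ^ t * 2 ^ F := by linarith

theorem sub_round_add_mem_dekker (ht : 1 ≤ t) (hmem : ∀ v, fl v ∈ Dekker 2 t Emin Emax)
    (hnear : ∀ v, ∀ a ∈ Dekker 2 t Emin Emax, |fl v - v| ≤ |a - v|) {x y : ℝ} {my ey : ℤ}
    (hxD : x ∈ Dekker 2 t Emin Emax) (hx : x ∈ zmultiples ((2 : ℝ) ^ ey)) (hmy : |my| < 2 ^ t)
    (hey₁ : Emin ≤ ey) (hey₂ : ey ≤ Emax) (hy : y = my * 2 ^ ey) :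
    x + y - fl (x + y) ∈ Dekker 2 t Emin Emax := by
  have hS : x + y ∈ zmultiples ((2 : ℝ) ^ ey) :=
    add_mem hx (hy ▸ int_mul_zpow_mem_zmultiples my le_rfl)
  refine mem_dekker_of_mem_zmultiples (sub_mem hS (round_mem_zmultiples ht hmem hnear hS hey₁ hey₂))
    ?_ hey₁ hey₂
  calc |x + y - fl (x + y)| = |fl (x + y) - (x + y)| := abs_sub_comm _ _
    _ ≤ |x - (x + y)| := hnear _ x hxD
    _ = |y| := by rw [sub_add_cancel_left, abs_neg]
    _ ≤ (2 ^ t - 1) * 2 ^ ey := hy ▸ abs_int_mul_zpow_le hmy ey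
    _ < 2 ^ t * 2 ^ ey := by linarith [zpow_pos (two_pos : (0 : ℝ) < 2) ey]

theorem round_add_sub_mem_dekker (ht : 1 ≤ t) (hmem : ∀ v, fl v ∈ Dekker 2 t Emin Emax)
    (hnear : ∀ v, ∀ a ∈ Dekker 2 t Emin Emax, |fl v - v| ≤ |a - v|) {x y : ℝ} {mx ex my ey : ℤ}
    (hmx : |mx| < 2 ^ t) (hex₂ : ex ≤ Emax) (hmy : |my| < 2 ^ t) (hey₁ : Emin ≤ ey)
    (hord : ey ≤ ex) (hx : x = mx * 2 ^ ex) (hy : y = my * 2 ^ ey) :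
    fl (x + y) - x ∈ Dekker 2 t Emin Emax := by
  have hxD : x ∈ Dekker 2 t Emin Emax := hx ▸ int_mul_zpow_mem_dekker hmx (hey₁.trans hord) hex₂
  have hyb : |y| ≤ (2 ^ t - 1) * 2 ^ ey := hy ▸ abs_int_mul_zpow_le hmy ey
  have hxe : x ∈ zmultiples ((2 : ℝ) ^ ey) := hx ▸ int_mul_zpow_mem_zmultiples mx hord
  have hye : y ∈ zmultiples ((2 : ℝ) ^ ey) := hy ▸ int_mul_zpow_mem_zmultiples my le_rfl
  have hz := round_mem_zmultiples ht hmem hnear (add_mem hxe hye) hey₁ (hord.trans hex₂)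
  by_cases hsmall : |fl (x + y) - x| < 2 ^ t * 2 ^ ey
  · exact mem_dekker_of_mem_zmultiples (sub_mem hz hxe) hsmall hey₁ (hord.trans hex₂)
  rw [not_lt] at hsmall
  have hinexact : 2 ^ t * 2 ^ ey ≤ |x + y| := by
    by_contra! h
    rw [round_eq_self_of_mem hnear
      (mem_dekker_of_mem_zmultiples (add_mem hxe hye) h hey₁ (hord.trans hex₂)),
      add_sub_cancel_left] at hsmall
    linarith [zpow_pos (two_pos : (0 : ℝ) < 2) ey]
  have hmax : |x + y| ≤ (2 ^ t - 1) * 2 ^ Emax := by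
    by_contra! h
    have := abs_round_sub_le_of_max_lt hmem hnear (by omega) h hxD
    rw [add_sub_cancel_left] at this
    linarith [zpow_pos (two_pos : (0 : ℝ) < 2) ey]
  obtain ⟨F, hF₁, hF₂⟩ :=
    exists_two_pow_mul_zpow_le_lt ((by positivity : (0 : ℝ) < 2 ^ t * 2 ^ ey).trans_le hinexact) t
  have heyF : ey < F + 1 := (zpow_lt_zpow_iff_right₀ one_lt_two).mp
    (lt_of_mul_lt_mul_left (hinexact.trans_lt hF₂) (by positivity))
  have hFmax : F < Emax := by
    have : (2 : ℝ) ^ t * 2 ^ F < 2 ^ t * 2 ^ Emax := by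
      linarith [zpow_pos (two_pos : (0 : ℝ) < 2) Emax]
    exact (zpow_lt_zpow_iff_right₀ one_lt_two).mp (lt_of_mul_lt_mul_left this (by positivity))
  have hFex := le_of_two_pow_mul_zpow_le_abs_add (hx ▸ abs_int_mul_zpow_le hmx ex) hyb hord hF₁
  refine round_add_sub_mem_dekker_of_binade ht hmem hnear (by omega) hFmax
    (hx ▸ int_mul_zpow_mem_zmultiples mx hFex) ?_ hF₁ hF₂.le hmax
  exact hyb.trans (mul_le_mul_of_nonneg_left (zpow_le_zpow_right₀ one_le_two (by omega))
    (two_pow_sub_one_nonneg t))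

end NearestDekker

theorem dekker_3op_eft_addition_general
    (t : ℕ) (Emin Emax : ℤ) (ht : 1 ≤ t)
    (fl : ℝ → ℝ)
    (hmem : ∀ x, fl x ∈ Dekker 2 t Emin Emax)
    (hnear : ∀ x, ∀ a ∈ Dekker 2 t Emin Emax, |fl x - x| ≤ |a - x|)
    (mx ex my ey : ℤ)
    (hmx : |mx| < 2 ^ t) (hex2 : ex ≤ Emax)
    (hmy : |my| < 2 ^ t) (hey1 : Emin ≤ ey) (hey2 : ey ≤ Emax)
    (hord : ey ≤ ex)
    (x y z w zz : ℝ)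
    (hx : x = (mx : ℝ) * (2 : ℝ) ^ ex) (hy : y = (my : ℝ) * (2 : ℝ) ^ ey)
    (hz : z = fl (x + y)) (hw : w = fl (z - x)) (hzz : zz = fl (y - w)) :
    w = z - x ∧ zz = y - w ∧ z + zz = x + y := by
  have hdiff : z - x ∈ Dekker 2 t Emin Emax :=
    hz ▸ round_add_sub_mem_dekker ht hmem hnear hmx hex2 hmy hey1 hord hx hy
  have herr : x + y - z ∈ Dekker 2 t Emin Emax :=
    hz ▸ sub_round_add_mem_dekker ht hmem hnear
      (hx ▸ int_mul_zpow_mem_dekker hmx (hey1.trans hord) hex2)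
      (hx ▸ int_mul_zpow_mem_zmultiples mx hord) hmy hey1 hey2 hy
  have hw' : w = z - x := hw ▸ round_eq_self_of_mem hnear hdiff
  have hzz' : zz = y - w := by
    rw [hzz, hw', show y - (z - x) = x + y - z by ring]
    exact round_eq_self_of_mem hnear herr
  exact ⟨hw', hzz', by rw [hzz', hw']; ring⟩

/-- the 3op error free transformation over addition in Dekker's binary system. -/
theorem dekker_3op_eft_addition
    (t : ℕ) (Emin Emax : ℤ) (ht : 1 ≤ t)
    (fl : ℝ → ℝ)
    (hmem : ∀ x, fl x ∈ Dekker 2 t Emin Emax)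
    (hnear : ∀ x, ∀ a ∈ Dekker 2 t Emin Emax, |fl x - x| ≤ |a - x|)
    (hneg : ∀ x, fl (-x) = -fl x)
    (mx ex my ey : ℤ)
    (hmx : |mx| < 2 ^ t) (hex1 : Emin ≤ ex) (hex2 : ex ≤ Emax)
    (hmy : |my| < 2 ^ t) (hey1 : Emin ≤ ey) (hey2 : ey ≤ Emax)
    (hord : ey ≤ ex)
    (x y z w zz : ℝ)
    (hx : x = (mx : ℝ) * (2 : ℝ) ^ ex) (hy : y = (my : ℝ) * (2 : ℝ) ^ ey)
    (hz : z = fl (x + y)) (hw : w = fl (z - x)) (hzz : zz = fl (y - w)) :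
    w = z - x ∧ zz = y - w ∧ z + zz = x + y :=
  dekker_3op_eft_addition_general t Emin Emax ht fl hmem hnear mx ex my ey hmx hex2 hmy hey1 hey2
    hord x y z w zz hx hy hz hw hzz
end

section
/- (6op EFT over addition) For all x, y ∈ D with β = 2 and under nearest rounding with t > 1 and no overflow, the sequence z = fl(x+y), w = fl(z−x), z1 = fl(y−w), v = fl(w−z), z2 = fl(x+v), zz = fl(z1+z2) satisfies z + zz = x + y exactly. -/
structure IsRoundNearest (D : Set ℝ) (fl : ℝ → ℝ) : Prop where
  mem : ∀ x, fl x ∈ D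
  abs_sub_le : ∀ x, ∀ a ∈ D, |fl x - x| ≤ |a - x|

namespace IsRoundNearest

variable {D : Set ℝ} {fl : ℝ → ℝ}

lemma eq_self (hfl : IsRoundNearest D fl) {a : ℝ} (ha : a ∈ D) : fl a = a := by
  simpa [sub_eq_zero] using hfl.abs_sub_le a a ha

lemma mono (hfl : IsRoundNearest D fl) {a b : ℝ} (h : a ≤ b) : fl a ≤ fl b := by
  rcases h.eq_or_lt with rfl | hlt
  · rfl
  by_contra! hba
  have h1 := sq_le_sq.2 (hfl.abs_sub_le a (fl b) (hfl.mem b))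
  have h2 := sq_le_sq.2 (hfl.abs_sub_le b (fl a) (hfl.mem a))
  nlinarith [mul_pos (sub_pos.2 hlt) (sub_pos.2 hba)]

end IsRoundNearest

namespace Dekker

noncomputable def grid (g : ℤ) : AddSubgroup ℝ := AddSubgroup.zmultiples ((2 : ℝ) ^ g)

lemma mem_grid {g : ℤ} {a : ℝ} : a ∈ grid g ↔ ∃ k : ℤ, a = k * 2 ^ g := by
  simp only [grid, AddSubgroup.mem_zmultiples_iff, zsmul_eq_mul, eq_comm]

lemma intCast_mul_mem_grid (k g : ℤ) : (k : ℝ) * 2 ^ g ∈ grid g := mem_grid.2 ⟨k, rfl⟩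

lemma zpow_mem_grid {g g' : ℤ} (h : g ≤ g') : (2 : ℝ) ^ g' ∈ grid g := by
  obtain ⟨n, rfl⟩ := Int.le.dest h
  refine mem_grid.2 ⟨2 ^ n, ?_⟩
  rw [zpow_add₀ two_ne_zero, zpow_natCast, mul_comm]
  push_cast; rfl

lemma grid_anti {g g' : ℤ} (h : g ≤ g') : grid g' ≤ grid g :=
  AddSubgroup.zmultiples_le.2 (zpow_mem_grid h)

lemma abs_le_of_mem_grid {n : ℕ} {g : ℤ} {a : ℝ} (ha : a ∈ grid g)
    (h : |a| < 2 ^ ((n : ℤ) + g)) : |a| ≤ 2 ^ ((n : ℤ) + g) - 2 ^ g := by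
  obtain ⟨k, rfl⟩ := mem_grid.1 ha
  have hpos : (0 : ℝ) < 2 ^ g := by positivity
  rw [abs_mul, abs_of_pos hpos, zpow_add₀ two_ne_zero, zpow_natCast] at h ⊢
  have hk : |k| < 2 ^ n := by exact_mod_cast lt_of_mul_lt_mul_right h hpos.le
  have hk' : |(k : ℝ)| ≤ 2 ^ n - 1 := by
    rw [← Int.cast_abs]; exact_mod_cast Int.le_sub_one_of_lt hk
  nlinarith

lemma abs_round_mul_le {g : ℤ} {s G : ℝ} (hG : G ∈ grid g) (hs : |s| ≤ G) :
    |(round (s / 2 ^ g) : ℝ) * 2 ^ g| ≤ G := by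
  obtain ⟨n, rfl⟩ := mem_grid.1 hG
  have hpos : (0 : ℝ) < 2 ^ g := by positivity
  have hx : |s / 2 ^ g| ≤ n := by
    rw [abs_div, abs_of_pos hpos, div_le_iff₀ hpos]; exact hs
  have hr : ((|round (s / 2 ^ g)| : ℤ) : ℝ) < n + 1 := by
    have h1 := abs_sub_round (s / 2 ^ g)
    have h2 := abs_sub_abs_le_abs_sub (round (s / 2 ^ g) : ℝ) (s / 2 ^ g)
    rw [abs_sub_comm] at h2
    push_cast
    linarith
  have hr' : |(round (s / 2 ^ g) : ℝ)| ≤ n := by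
    rw [← Int.cast_abs]; exact_mod_cast Int.lt_add_one_iff.1 (by exact_mod_cast hr)
  rw [abs_mul, abs_of_pos hpos]
  exact mul_le_mul_of_nonneg_right hr' hpos.le

variable {t : ℕ} {Emin Emax : ℤ} {fl : ℝ → ℝ}

local notation "𝔻" => Dekker 2 t Emin Emax
local notation "Ω" => ((2 ^ t - 1 : ℤ) : ℝ) * (2 : ℝ) ^ Emax

lemma mem_of_mem_grid_of_abs_lt {g : ℤ} {a : ℝ} (hg : Emin ≤ g) (hgE : g ≤ Emax)
    (ha : a ∈ grid g) (hlt : |a| < 2 ^ ((t : ℤ) + g)) : a ∈ 𝔻 := by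
  obtain ⟨k, rfl⟩ := mem_grid.1 ha
  refine ⟨k, g, ?_, hg, hgE, by push_cast; rfl⟩
  have hpos : (0 : ℝ) < 2 ^ g := by positivity
  rw [abs_mul, abs_of_pos hpos, zpow_add₀ two_ne_zero, zpow_natCast] at hlt
  exact_mod_cast lt_of_mul_lt_mul_right hlt hpos.le

lemma exists_mem_grid {a : ℝ} (ha : a ∈ 𝔻) :
    ∃ e, Emin ≤ e ∧ e ≤ Emax ∧ a ∈ grid e ∧ |a| < 2 ^ ((t : ℤ) + e) := by
  obtain ⟨m, e, hm, h1, h2, rfl⟩ := ha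
  refine ⟨e, h1, h2, by simpa using intCast_mul_mem_grid m e, ?_⟩
  rw [abs_mul, Int.cast_ofNat, abs_of_pos (zpow_pos two_pos e : (0 : ℝ) < 2 ^ e),
    zpow_add₀ two_ne_zero, zpow_natCast, ← Int.cast_abs]
  gcongr
  exact_mod_cast hm

lemma le_of_mem {a : ℝ} (ha : a ∈ 𝔻) : Emin ≤ Emax := by
  obtain ⟨e, h1, h2, -⟩ := exists_mem_grid ha
  exact h1.trans h2

lemma neg_mem {a : ℝ} (ha : a ∈ 𝔻) : -a ∈ 𝔻 := by
  obtain ⟨m, e, hm, h1, h2, rfl⟩ := ha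
  exact ⟨-m, e, by rwa [abs_neg], h1, h2, by push_cast; ring⟩

lemma abs_mem {a : ℝ} (ha : a ∈ 𝔻) : |a| ∈ 𝔻 := by
  rcases abs_choice a with h | h <;> rw [h]
  exacts [ha, neg_mem ha]

lemma omega_mem_grid {g : ℤ} (h : g ≤ Emax) : Ω ∈ grid g :=
  grid_anti h (intCast_mul_mem_grid _ _)

lemma omega_lt_two_zpow : Ω < 2 ^ ((t : ℤ) + Emax) := by
  rw [zpow_add₀ two_ne_zero, zpow_natCast]
  gcongr
  push_cast
  linarith

lemma omega_nonneg : (0 : ℝ) ≤ Ω := by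
  have : (1 : ℝ) ≤ 2 ^ t := one_le_pow₀ one_le_two
  have : (0 : ℝ) ≤ ((2 ^ t - 1 : ℤ) : ℝ) := by push_cast; linarith
  positivity

lemma abs_le_omega {a : ℝ} (ha : a ∈ 𝔻) : |a| ≤ Ω := by
  obtain ⟨e, -, he, hag, hlt⟩ := exists_mem_grid ha
  have h0 : (0 : ℝ) ≤ 2 ^ t - 1 := by
    have : (1 : ℝ) ≤ 2 ^ t := one_le_pow₀ one_le_two
    linarith
  calc |a| ≤ 2 ^ ((t : ℤ) + e) - 2 ^ e := abs_le_of_mem_grid hag hlt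
    _ = (2 ^ t - 1) * 2 ^ e := by rw [zpow_add₀ two_ne_zero, zpow_natCast]; ring
    _ ≤ Ω := by
      push_cast
      exact mul_le_mul_of_nonneg_left (zpow_le_zpow_right₀ one_le_two he) h0

lemma mem_of_mem_grid_of_abs_le_of_lt_emax (ht : 1 ≤ t) {g : ℤ} {a : ℝ} (hg : Emin ≤ g)
    (hgE : g < Emax) (ha : a ∈ grid g) (hle : |a| ≤ 2 ^ ((t : ℤ) + g)) : a ∈ 𝔻 := by
  rcases hle.lt_or_eq with hlt | heq
  · exact mem_of_mem_grid_of_abs_lt hg hgE.le ha hlt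
  · -- a power of two `± 2 ^ (t + g)` also lies on the coarser grid `g + 1`
    have h2 : (2 : ℝ) ^ ((t : ℤ) + g) ∈ grid (g + 1) := zpow_mem_grid (by omega)
    refine mem_of_mem_grid_of_abs_lt (g := g + 1) (by omega) hgE ?_ ?_
    · rw [← abs_mem_iff, heq]; exact h2
    · rw [heq]; exact zpow_lt_zpow_right₀ one_lt_two (by omega)

lemma mem_of_mem_grid_of_abs_le (ht : 1 ≤ t) (hE : Emin ≤ Emax) {g : ℤ} {a : ℝ}
    (hg : Emin ≤ g) (ha : a ∈ grid g) (hle : |a| ≤ 2 ^ ((t : ℤ) + g)) (hΩ : |a| ≤ Ω) :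
    a ∈ 𝔻 := by
  rcases lt_or_ge g Emax with hgE | hgE
  · exact mem_of_mem_grid_of_abs_le_of_lt_emax ht hg hgE ha hle
  · exact mem_of_mem_grid_of_abs_lt hE le_rfl (grid_anti hgE ha)
      (hΩ.trans_lt omega_lt_two_zpow)

lemma zero_mem (hE : Emin ≤ Emax) : (0 : ℝ) ∈ 𝔻 :=
  mem_of_mem_grid_of_abs_lt hE le_rfl (AddSubgroup.zero_mem _) (by rw [abs_zero]; positivity)

lemma omega_mem (hE : Emin ≤ Emax) : Ω ∈ 𝔻 :=
  mem_of_mem_grid_of_abs_lt hE le_rfl (omega_mem_grid le_rfl)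
    (by rw [abs_of_nonneg omega_nonneg]; exact omega_lt_two_zpow)

/-- The canonical exponent of Flocq: `2 ^ cexp t Emin a` is the ulp of `a`. -/
noncomputable def cexp (t : ℕ) (Emin : ℤ) (a : ℝ) : ℤ := max Emin (Int.log 2 |a| - t + 1)

lemma le_cexp (a : ℝ) : Emin ≤ cexp t Emin a := le_max_left _ _

lemma abs_lt_two_zpow_cexp (a : ℝ) : |a| < 2 ^ ((t : ℤ) + cexp t Emin a) := by
  have h := Int.lt_zpow_succ_log_self (R := ℝ) one_lt_two |a|
  push_cast at h
  exact h.trans_le (zpow_le_zpow_right₀ one_le_two (by unfold cexp; omega))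

lemma two_zpow_cexp_le_abs {a : ℝ} (ha : a ≠ 0) (h : Emin < cexp t Emin a) :
    2 ^ ((t : ℤ) + cexp t Emin a - 1) ≤ |a| := by
  have hc : (t : ℤ) + cexp t Emin a - 1 = Int.log 2 |a| := by unfold cexp at h ⊢; omega
  rw [hc]
  exact_mod_cast Int.zpow_log_le_self (R := ℝ) one_lt_two (abs_pos.2 ha)

lemma le_cexp_of_two_zpow_le_abs {a : ℝ} {g : ℤ} (h : (2 : ℝ) ^ ((t : ℤ) + g - 1) ≤ |a|) :
    g ≤ cexp t Emin a := by
  have ha : 0 < |a| := (zpow_pos two_pos _).trans_le h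
  have := (Int.zpow_le_iff_le_log (R := ℝ) one_lt_two ha).1 (by exact_mod_cast h)
  unfold cexp; omega

lemma cexp_le_of_abs_lt {a : ℝ} {g : ℤ} (ha : a ≠ 0) (hg : Emin ≤ g)
    (h : |a| < 2 ^ ((t : ℤ) + g)) : cexp t Emin a ≤ g := by
  have := (Int.lt_zpow_iff_log_lt (R := ℝ) one_lt_two (abs_pos.2 ha)).1 (by exact_mod_cast h)
  unfold cexp; omega

lemma cexp_mono {a b : ℝ} (ha : a ≠ 0) (h : |a| ≤ |b|) : cexp t Emin a ≤ cexp t Emin b := by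
  have := Int.log_mono_right (b := 2) (abs_pos.2 ha) h
  unfold cexp; omega

lemma cexp_add_le {a b : ℝ} (hab : a + b ≠ 0) (hba : |b| ≤ |a|) :
    cexp t Emin (a + b) ≤ cexp t Emin a + 1 := by
  refine cexp_le_of_abs_lt hab ((le_cexp (t := t) a).trans (by omega)) ?_
  have := abs_lt_two_zpow_cexp (t := t) (Emin := Emin) a
  calc |a + b| ≤ |a| + |b| := abs_add_le a b
    _ < 2 ^ ((t : ℤ) + cexp t Emin a) + 2 ^ ((t : ℤ) + cexp t Emin a) := by linarith
    _ = 2 ^ ((t : ℤ) + (cexp t Emin a + 1)) := by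
      rw [← add_assoc, zpow_add_one₀ two_ne_zero]; ring

lemma mem_grid_cexp {a : ℝ} (ha : a ∈ 𝔻) : a ∈ grid (cexp t Emin a) := by
  rcases eq_or_ne a 0 with rfl | h0
  · exact AddSubgroup.zero_mem _
  obtain ⟨e, he, -, hag, hlt⟩ := exists_mem_grid ha
  exact grid_anti (cexp_le_of_abs_lt h0 he hlt) hag

lemma mem_grid_cexp_of_abs_le {a b : ℝ} (ha : a ∈ 𝔻) (hb : b ≠ 0) (h : |b| ≤ |a|) :
    a ∈ grid (cexp t Emin b) :=
  grid_anti (cexp_mono hb h) (mem_grid_cexp ha)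

lemma mem_of_mem_grid_cexp (ht : 1 ≤ t) {b c : ℝ} (hb : b ∈ 𝔻)
    (hc : c ∈ grid (cexp t Emin b)) (h : |c| ≤ |b|) : c ∈ 𝔻 :=
  mem_of_mem_grid_of_abs_le ht (le_of_mem hb) (le_cexp b) hc
    (h.trans (abs_lt_two_zpow_cexp b).le) (h.trans (abs_le_omega hb))

lemma add_mem_of_abs_add_le (ht : 1 ≤ t) {a b : ℝ} (ha : a ∈ 𝔻) (hb : b ∈ 𝔻)
    (h : |a + b| ≤ |b|) (hba : |b| ≤ |a|) : a + b ∈ 𝔻 := by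
  rcases eq_or_ne b 0 with rfl | hb0
  · rwa [add_zero]
  exact mem_of_mem_grid_cexp ht hb
    (add_mem (mem_grid_cexp_of_abs_le ha hb0 hba) (mem_grid_cexp hb)) h

lemma eq_omega_of_omega_sub_lt {y : ℝ} (hy : y ∈ 𝔻) (hy0 : y ≠ 0)
    (h : Ω - y < 2 ^ cexp t Emin y) : y = Ω := by
  have hg : Ω - y ∈ grid (cexp t Emin y) :=
    sub_mem (mem_grid_cexp_of_abs_le (omega_mem (le_of_mem hy)) hy0
      ((abs_le_omega hy).trans (le_abs_self _))) (mem_grid_cexp hy)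
  have h0 : 0 ≤ Ω - y := by linarith [le_abs_self y, abs_le_omega hy]
  have h1 := abs_le_of_mem_grid (n := 0) hg
    (by rw [abs_of_nonneg h0, Nat.cast_zero, zero_add]; exact h)
  rw [Nat.cast_zero, zero_add, sub_self, abs_nonpos_iff, sub_eq_zero] at h1
  exact h1.symm

lemma abs_le_abs_fl (hfl : IsRoundNearest 𝔻 fl) {a s : ℝ} (ha : a ∈ 𝔻) (h : |a| ≤ |s|) :
    |a| ≤ |fl s| := by
  rcases le_total 0 s with hs | hs
  · rw [abs_of_nonneg hs] at h
    have := hfl.mono h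
    rw [hfl.eq_self (abs_mem ha)] at this
    exact this.trans (le_abs_self _)
  · rw [abs_of_nonpos hs] at h
    have := hfl.mono (show s ≤ -|a| by linarith)
    rw [hfl.eq_self (neg_mem (abs_mem ha))] at this
    linarith [neg_le_abs (fl s)]

lemma fl_eq_omega (hfl : IsRoundNearest 𝔻 fl) {u : ℝ} (h : Ω < u) : fl u = Ω := by
  have hΩ := omega_mem (t := t) (le_of_mem (hfl.mem 0))
  refine le_antisymm ((le_abs_self _).trans (abs_le_omega (hfl.mem u))) ?_
  calc Ω = fl Ω := (hfl.eq_self hΩ).symm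
    _ ≤ fl u := hfl.mono h.le

lemma fl_mem_grid (hfl : IsRoundNearest 𝔻 fl) (ht : 1 ≤ t) {g : ℤ} {s : ℝ} (hg : Emin ≤ g)
    (hs : s ∈ grid g) (hΩ : |s| ≤ Ω) : fl s ∈ grid g := by
  have hE := le_of_mem (hfl.mem 0)
  rcases le_or_gt |s| (2 ^ ((t : ℤ) + g)) with hle | hlt
  · rw [hfl.eq_self (mem_of_mem_grid_of_abs_le ht hE hg hs hle hΩ)]
    exact hs
  -- otherwise `|fl s| ≥ 2 ^ (t + g)` by monotonicity, so `fl s` lies on a coarser grid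
  have hpos : (0 : ℝ) < 2 ^ ((t : ℤ) + g) := by positivity
  have hpow : (2 : ℝ) ^ ((t : ℤ) + g) ∈ 𝔻 :=
    mem_of_mem_grid_of_abs_le ht hE hg (zpow_mem_grid (by omega)) (abs_of_pos hpos).le
      (by rw [abs_of_pos hpos]; linarith)
  have h := abs_le_abs_fl hfl hpow (s := s) (by rw [abs_of_pos hpos]; exact hlt.le)
  rw [abs_of_pos hpos] at h
  have hc : g + 1 ≤ cexp t Emin (fl s) :=
    le_cexp_of_two_zpow_le_abs (by rwa [show (t : ℤ) + (g + 1) - 1 = t + g by ring])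
  exact grid_anti (by omega) (mem_grid_cexp (hfl.mem s))

lemma abs_fl_sub_le (hfl : IsRoundNearest 𝔻 fl) (ht : 1 ≤ t) {s : ℝ} (hΩ : |s| ≤ Ω) :
    |fl s - s| ≤ 2 ^ (cexp t Emin s - 1) := by
  have hE := le_of_mem (hfl.mem 0)
  rcases eq_or_ne s 0 with rfl | hs0
  · rw [hfl.eq_self (zero_mem hE), sub_zero, abs_zero]; positivity
  set g := cexp t Emin s
  have hgE : g ≤ Emax := cexp_le_of_abs_lt hs0 hE (hΩ.trans_lt omega_lt_two_zpow)
  have hpos : (0 : ℝ) < 2 ^ g := by positivity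
  -- the nearest point of the grid `g` is a floating point number
  have hc : (round (s / 2 ^ g) : ℝ) * 2 ^ g ∈ 𝔻 :=
    mem_of_mem_grid_of_abs_le ht hE (le_cexp s) (intCast_mul_mem_grid _ _)
      (abs_round_mul_le (zpow_mem_grid (by omega)) (abs_lt_two_zpow_cexp s).le)
      (abs_round_mul_le (omega_mem_grid hgE) hΩ)
  calc |fl s - s| ≤ |(round (s / 2 ^ g) : ℝ) * 2 ^ g - s| := hfl.abs_sub_le s _ hc
    _ = |s / 2 ^ g - round (s / 2 ^ g)| * 2 ^ g := by
      rw [← abs_of_pos hpos, ← abs_mul, abs_of_pos hpos, abs_sub_comm]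
      congr 1; field_simp
    _ ≤ 1 / 2 * 2 ^ g := mul_le_mul_of_nonneg_right (abs_sub_round _) hpos.le
    _ = 2 ^ (g - 1) := by rw [zpow_sub_one₀ two_ne_zero]; ring

lemma fl_mem_grid_cexp_sub_one (hfl : IsRoundNearest 𝔻 fl) (ht : 1 ≤ t) {s : ℝ} (hs0 : s ≠ 0)
    (hg : Emin < cexp t Emin s) (hΩ : |s| ≤ Ω) : fl s ∈ grid (cexp t Emin s - 1) := by
  set g := cexp t Emin s
  refine grid_anti (le_cexp_of_two_zpow_le_abs ?_) (mem_grid_cexp (hfl.mem s))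
  have h1 : |s| - |fl s| ≤ |fl s - s| := by
    rw [abs_sub_comm]; exact abs_sub_abs_le_abs_sub _ _
  have h2 : (2 : ℝ) ^ (g - 1) ≤ 2 ^ ((t : ℤ) + (g - 1) - 1) :=
    zpow_le_zpow_right₀ one_le_two (by omega)
  have h3 : (2 : ℝ) ^ ((t : ℤ) + g - 1) = 2 * 2 ^ ((t : ℤ) + (g - 1) - 1) := by
    rw [← zpow_one_add₀ two_ne_zero]; ring_nf
  linarith [two_zpow_cexp_le_abs hs0 hg, abs_fl_sub_le hfl ht hΩ]

lemma fl_add_sub_mem (hfl : IsRoundNearest 𝔻 fl) (ht : 1 ≤ t) {p q : ℝ} (hp : p ∈ 𝔻)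
    (hq : q ∈ 𝔻) (hΩ : |p + q| ≤ Ω) : fl (p + q) - (p + q) ∈ 𝔻 := by
  wlog hqp : |q| ≤ |p| generalizing p q
  · rw [add_comm] at hΩ ⊢
    exact this hq hp hΩ (le_of_not_ge hqp)
  rcases eq_or_ne q 0 with rfl | hq0
  · rw [add_zero, hfl.eq_self hp, sub_self]
    exact zero_mem (le_of_mem hp)
  have hs : p + q ∈ grid (cexp t Emin q) :=
    add_mem (mem_grid_cexp_of_abs_le hp hq0 hqp) (mem_grid_cexp hq)
  refine mem_of_mem_grid_cexp ht hq (sub_mem (fl_mem_grid hfl ht (le_cexp q) hs hΩ) hs) ?_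
  simpa using hfl.abs_sub_le (p + q) p hp

lemma fl_add_sub_left_mem (hfl : IsRoundNearest 𝔻 fl) (ht : 1 ≤ t) {a b : ℝ} (ha : a ∈ 𝔻)
    (hb : b ∈ 𝔻) (hba : |b| ≤ |a|) (hΩ : |a + b| ≤ Ω) : fl (a + b) - a ∈ 𝔻 := by
  have hE := le_of_mem ha
  rcases eq_or_ne b 0 with rfl | hb0
  · rw [add_zero, hfl.eq_self ha, sub_self]
    exact zero_mem hE
  set eb := cexp t Emin b
  have hsg : a + b ∈ grid eb := add_mem (mem_grid_cexp_of_abs_le ha hb0 hba) (mem_grid_cexp hb)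
  rcases le_or_gt |a + b| (2 ^ ((t : ℤ) + eb)) with hle | hlt
  · rw [hfl.eq_self (mem_of_mem_grid_of_abs_le ht hE (le_cexp b) hsg hle hΩ),
      add_sub_cancel_left]
    exact hb
  -- the sum is inexact; both `fl (a + b)` and `a` lie on the grid `cexp (a + b) - 1`
  set g := cexp t Emin (a + b)
  have hs0 : a + b ≠ 0 := by
    rintro h0
    rw [h0, abs_zero] at hlt
    exact (zpow_pos two_pos _).not_gt hlt
  have hbg : eb + 1 ≤ g :=
    le_cexp_of_two_zpow_le_abs (by rw [show (t : ℤ) + (eb + 1) - 1 = t + eb by ring]; exact hlt.le)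
  have hgE : g ≤ Emax := cexp_le_of_abs_lt hs0 hE (hΩ.trans_lt omega_lt_two_zpow)
  have hr : fl (a + b) ∈ grid (g - 1) :=
    fl_mem_grid_cexp_sub_one hfl ht hs0 ((le_cexp (t := t) b).trans_lt (by omega)) hΩ
  have hag : a ∈ grid (g - 1) :=
    grid_anti (by linarith [cexp_add_le (t := t) (Emin := Emin) hs0 hba]) (mem_grid_cexp ha)
  refine mem_of_mem_grid_of_abs_le_of_lt_emax ht
    ((le_cexp (t := t) b).trans (by omega)) (by omega) (sub_mem hr hag) ?_
  have hb' : |b| ≤ 2 ^ ((t : ℤ) + eb) - 2 ^ eb :=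
    abs_le_of_mem_grid (mem_grid_cexp hb) (abs_lt_two_zpow_cexp b)
  have hmono : (2 : ℝ) ^ ((t : ℤ) + eb) - 2 ^ eb ≤ 2 ^ ((t : ℤ) + (g - 1)) - 2 ^ (g - 1) := by
    have h1 : (1 : ℝ) ≤ 2 ^ t := one_le_pow₀ one_le_two
    have h2 : (2 : ℝ) ^ eb ≤ 2 ^ (g - 1) := zpow_le_zpow_right₀ one_le_two (by omega)
    rw [zpow_add₀ two_ne_zero, zpow_add₀ two_ne_zero, zpow_natCast]
    nlinarith
  calc |fl (a + b) - a| = |b + (fl (a + b) - (a + b))| := by ring_nf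
    _ ≤ |b| + |fl (a + b) - (a + b)| := abs_add_le _ _
    _ ≤ 2 ^ ((t : ℤ) + (g - 1)) := by linarith [abs_fl_sub_le hfl ht hΩ]

/-- With `w = fl (fl (x + y) - x)` standing for the virtual `y`, these make the corrections
`fl (y - w)`, `fl (w - z)` and `fl (x + fl (w - z))` exact. -/
def ExactCorrections (D : Set ℝ) (x y z w : ℝ) : Prop :=
  y - w ∈ D ∧ w - z ∈ D ∧ x + (w - z) ∈ D

variable {x y z w : ℝ}

lemma add_fl_corrections_eq (hfl : IsRoundNearest 𝔻 fl) (hδ : z - (x + y) ∈ 𝔻)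
    (h : ExactCorrections 𝔻 x y z w) : z + fl (fl (y - w) + fl (x + fl (w - z))) = x + y := by
  obtain ⟨h1, h2, h3⟩ := h
  rw [hfl.eq_self h1, hfl.eq_self h2, hfl.eq_self h3,
    show y - w + (x + (w - z)) = -(z - (x + y)) by ring, hfl.eq_self (neg_mem hδ)]
  ring

lemma exactCorrections_of_add_mem (hfl : IsRoundNearest 𝔻 fl) (hx : x ∈ 𝔻) (hy : y ∈ 𝔻)
    (hs : x + y ∈ 𝔻) (hz : z = fl (x + y)) (hw : w = fl (z - x)) :
    ExactCorrections 𝔻 x y z w := by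
  have hz' : z = x + y := hz ▸ hfl.eq_self hs
  have hw' : w = y := by rw [hw, hz', add_sub_cancel_left, hfl.eq_self hy]
  have h0 := zero_mem (t := t) (le_of_mem hx)
  subst hz' hw'
  refine ⟨by rwa [sub_self], by convert neg_mem hx using 1; ring, by convert h0 using 1; ring⟩

lemma exactCorrections_of_abs_le (hfl : IsRoundNearest 𝔻 fl) (ht : 1 ≤ t) (hx : x ∈ 𝔻)
    (hy : y ∈ 𝔻) (hyx : |y| ≤ |x|) (hΩ : |x + y| ≤ Ω) (hδ : z - (x + y) ∈ 𝔻)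
    (hz : z = fl (x + y)) (hw : w = fl (z - x)) : ExactCorrections 𝔻 x y z w := by
  have hw' : w = z - x := by
    rw [hw, hfl.eq_self (hz ▸ fl_add_sub_left_mem hfl ht hx hy hyx hΩ)]
  have h0 := zero_mem (t := t) (le_of_mem hx)
  subst hw'
  refine ⟨by convert neg_mem hδ using 1; ring, by convert neg_mem hx using 1; ring,
    by convert h0 using 1; ring⟩

lemma exactCorrections_of_le_omega (hfl : IsRoundNearest 𝔻 fl) (ht : 1 ≤ t) (hx : x ∈ 𝔻)
    (hy : y ∈ 𝔻) (hxz : |x| ≤ |z|) (hΩ : |z - x| ≤ Ω) (hδ : z - (x + y) ∈ 𝔻)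
    (hz : z = fl (x + y)) (hw : w = fl (z - x)) : ExactCorrections 𝔻 x y z w := by
  have hδy : |z - (x + y)| ≤ |y| := by simpa [hz] using hfl.abs_sub_le (x + y) x hx
  have hzx : z - x = y + (z - (x + y)) := by ring
  refine ⟨?_, ?_, ?_⟩
  · have := fl_add_sub_left_mem hfl ht hy hδ hδy (hzx ▸ hΩ)
    rw [← hzx, ← hw] at this
    convert neg_mem this using 1; ring
  · have := fl_add_sub_left_mem hfl ht (hz ▸ hfl.mem _) (neg_mem hx) (by rwa [abs_neg]) hΩ
    rwa [← sub_eq_add_neg, ← hw] at this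
  · have := fl_add_sub_mem hfl ht hy hδ (hzx ▸ hΩ)
    rw [← hzx, ← hw] at this
    convert this using 1; ring

lemma exactCorrections_of_omega_lt (hfl : IsRoundNearest 𝔻 fl) (ht : 1 ≤ t) (hx : x ∈ 𝔻)
    (hy : y ∈ 𝔻) (hxy : |x| ≤ |y|) (hs : 0 ≤ x + y) (hΩ : |x + y| ≤ Ω) (hlt : Ω < |z - x|)
    (hδ : z - (x + y) ∈ 𝔻) (hz : z = fl (x + y)) (hw : w = fl (z - x)) :
    ExactCorrections 𝔻 x y z w := by
  have hE := le_of_mem hx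
  have hxΩ := abs_le_omega hx
  have hz0 : 0 ≤ z := by
    have := hfl.mono hs
    rwa [hfl.eq_self (zero_mem hE), ← hz] at this
  have hzx : Ω < z - x := by
    rcases le_or_gt 0 (z - x) with h | h
    · rwa [abs_of_nonneg h] at hlt
    · rw [abs_of_neg h] at hlt; linarith [le_abs_self x]
  have hs0 : x + y ≠ 0 := by
    rintro h0
    rw [hz, h0, hfl.eq_self (zero_mem hE), zero_sub, abs_neg] at hlt
    linarith
  have hy0 : y ≠ 0 := by
    rintro rfl
    exact hs0 (by simpa using abs_nonpos_iff.1 (hxy.trans_eq abs_zero))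
  -- `z - x = y + δ` exceeds `Ω` although `δ` is at most one ulp of `y`
  have hulp : z - (x + y) ≤ 2 ^ (cexp t Emin y) := by
    have h1 := abs_fl_sub_le hfl ht hΩ
    have h2 := cexp_add_le (t := t) (Emin := Emin) (by rwa [add_comm]) hxy
    rw [add_comm y x] at h2
    rw [← hz] at h1
    exact (le_abs_self _).trans (h1.trans (zpow_le_zpow_right₀ one_le_two (by omega)))
  have hyΩ : y = Ω := eq_omega_of_omega_sub_lt hy hy0 (by linarith)
  have hw' : w = y := by rw [hw, fl_eq_omega hfl hzx, hyΩ]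
  subst hw'
  refine ⟨by rw [sub_self]; exact zero_mem hE, ?_, by convert neg_mem hδ using 1; ring⟩
  have := fl_add_sub_left_mem hfl ht hy hx hxy (by rwa [add_comm])
  rw [add_comm, ← hz] at this
  convert neg_mem this using 1; ring

lemma exactCorrections (hfl : IsRoundNearest 𝔻 fl) (ht : 1 ≤ t) (hx : x ∈ 𝔻) (hy : y ∈ 𝔻)
    (hs : 0 ≤ x + y) (hΩ : |x + y| ≤ Ω) (hz : z = fl (x + y)) (hw : w = fl (z - x)) :
    ExactCorrections 𝔻 x y z w := by
  have hδ : z - (x + y) ∈ 𝔻 := hz ▸ fl_add_sub_mem hfl ht hx hy hΩ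
  rcases le_total |y| |x| with hyx | hxy
  · exact exactCorrections_of_abs_le hfl ht hx hy hyx hΩ hδ hz hw
  rcases lt_or_ge |x + y| |x| with hsx | hxs
  · -- Sterbenz
    refine exactCorrections_of_add_mem hfl hx hy ?_ hz hw
    rw [add_comm] at hsx ⊢
    exact add_mem_of_abs_add_le ht hy hx hsx.le hxy
  rcases le_or_gt |z - x| Ω with hzx | hzx
  · exact exactCorrections_of_le_omega hfl ht hx hy (hz ▸ abs_le_abs_fl hfl hx hxs) hzx hδ hz hw
  · exact exactCorrections_of_omega_lt hfl ht hx hy hxy hs hΩ hzx hδ hz hw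

end Dekker

/-- the 6op error free transformation over addition in Dekker's binary system. -/
theorem dekker_6op_eft_addition
    (t : ℕ) (Emin Emax : ℤ) (ht : 1 < t)
    (fl : ℝ → ℝ)
    (hmem : ∀ x, fl x ∈ Dekker 2 t Emin Emax)
    (hnear : ∀ x, ∀ a ∈ Dekker 2 t Emin Emax, |fl x - x| ≤ |a - x|)
    (hneg : ∀ x, fl (-x) = -fl x)
    (x y : ℝ) (hx : x ∈ Dekker 2 t Emin Emax) (hy : y ∈ Dekker 2 t Emin Emax)
    (hov : |x + y| ≤ ((2 ^ t - 1 : ℤ) : ℝ) * (2 : ℝ) ^ Emax)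
    (z w z1 v z2 zz : ℝ)
    (hz : z = fl (x + y)) (hw : w = fl (z - x)) (hz1 : z1 = fl (y - w))
    (hv : v = fl (w - z)) (hz2 : z2 = fl (x + v)) (hzz : zz = fl (z1 + z2)) :
    z + zz = x + y := by
  have hfl : IsRoundNearest (Dekker 2 t Emin Emax) fl := ⟨hmem, hnear⟩
  -- the algorithm commutes with negation
  wlog hs : 0 ≤ x + y generalizing x y z w z1 v z2 zz
  · have := this (-x) (-y) (Dekker.neg_mem hx) (Dekker.neg_mem hy)
      (by rwa [← neg_add, abs_neg]) (-z) (-w) (-z1) (-v) (-z2) (-zz)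
      (by rw [← neg_add, hneg, hz]) (by rw [← neg_sub', hneg, hw])
      (by rw [← neg_sub', hneg, hz1]) (by rw [← neg_sub', hneg, hv])
      (by rw [← neg_add, hneg, hz2]) (by rw [← neg_add, hneg, hzz]) (by linarith)
    linarith
  subst hz1 hv hz2 hzz
  exact Dekker.add_fl_corrections_eq hfl (hz ▸ Dekker.fl_add_sub_mem hfl ht.le hx hy hov)
    (Dekker.exactCorrections hfl ht.le hx hy hs hov hz hw)
end

section
/- Let β = 2 and let y = m(y)·2^{e(y)} ∈ D with 2^{t-1} ≤ |m(y)| < 2^t and e(y) > E_min. For any real w̃ ∈ [y − 2^{e(y)-1}, y + 2^{e(y)-1}], the difference y − fl(w̃) can only take the values 0, ±2^{e(y)-1}, or ±2^{e(y)}; in particular y − fl(w̃) ∈ D. -/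
lemma le_abs_of_nearer {r x a : ℝ} (hax : a ≤ |x|)
    (hpos : |r - x| ≤ |a - x|) (hneg : |r - x| ≤ |-a - x|) : a ≤ |r| := by
  rcases abs_cases x with ⟨hx, -⟩ | ⟨hx, -⟩ <;> rw [hx] at hax
  · rw [abs_of_nonpos (by linarith : a - x ≤ 0)] at hpos
    linarith [neg_abs_le (r - x), le_abs_self r]
  · rw [abs_of_nonneg (by linarith : 0 ≤ -a - x)] at hneg
    linarith [le_abs_self (r - x), neg_abs_le r]

lemma int_mul_zpow_sub_one_mem_of_abs_le_two (e j : ℤ) (hj : |j| ≤ 2) :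
    (j : ℝ) * 2 ^ (e - 1) ∈
      ({0, (2 : ℝ) ^ (e - 1), -(2 : ℝ) ^ (e - 1), (2 : ℝ) ^ e, -(2 : ℝ) ^ e} : Set ℝ) := by
  have h2e : (2 : ℝ) ^ e = 2 * 2 ^ (e - 1) := by
    rw [zpow_sub_one₀ two_ne_zero]; field_simp
  obtain ⟨hj1, hj2⟩ := abs_le.mp hj
  simp only [Set.mem_insert_iff, Set.mem_singleton_iff, h2e]
  interval_cases j <;> norm_num

namespace Dekker

variable {t : ℕ} {Emin Emax : ℤ}

lemma neg_mem_s12 {β : ℤ} {x : ℝ} (hx : x ∈ Dekker β t Emin Emax) : -x ∈ Dekker β t Emin Emax := by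
  obtain ⟨m, e, hm, he1, he2, rfl⟩ := hx
  exact ⟨-m, e, by rwa [abs_neg], he1, he2, by push_cast; ring⟩

lemma two_zpow_mem (ht : 1 ≤ t) {e : ℤ} (he1 : Emin ≤ e) (he2 : e ≤ Emax) :
    (2 : ℝ) ^ e ∈ Dekker 2 t Emin Emax :=
  ⟨1, e, by simpa using one_lt_pow₀ one_lt_two (by omega : t ≠ 0), he1, he2, by simp⟩

lemma two_pow_pred_mul_zpow_mem (ht : 1 ≤ t) {e : ℤ} (he1 : Emin ≤ e) (he2 : e ≤ Emax) :
    (2 : ℝ) ^ (t - 1) * 2 ^ e ∈ Dekker 2 t Emin Emax :=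
  ⟨2 ^ (t - 1), e, by rw [abs_of_pos (by positivity)]; exact pow_lt_pow_right₀ one_lt_two (by omega),
    he1, he2, by push_cast; rfl⟩

lemma exists_int_mul_zpow_of_le_abs {x : ℝ} {f : ℤ} (hx : x ∈ Dekker 2 t Emin Emax)
    (hf : (2 : ℝ) ^ (t - 1) * 2 ^ f ≤ |x|) : ∃ k : ℤ, x = k * 2 ^ f := by
  obtain ⟨m, e, hm, -, -, rfl⟩ := hx
  have hm' : |(m : ℝ)| < 2 ^ t := by exact_mod_cast hm
  have hlt : (2 : ℝ) ^ (t - 1) * 2 ^ f < 2 ^ (t - 1) * 2 ^ (e + 1) :=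
    calc (2 : ℝ) ^ (t - 1) * 2 ^ f ≤ |(m : ℝ)| * 2 ^ e := by simpa [abs_mul] using hf
      _ < 2 ^ t * 2 ^ e := by gcongr
      _ ≤ 2 ^ (t - 1) * 2 * 2 ^ e := by rw [← pow_succ]; gcongr <;> norm_num; omega
      _ = 2 ^ (t - 1) * 2 ^ (e + 1) := by rw [zpow_add_one₀ two_ne_zero]; ring
  have hfe : f ≤ e :=
    Int.lt_add_one_iff.mp ((zpow_lt_zpow_iff_right₀ one_lt_two).mp
      (lt_of_mul_lt_mul_left hlt (by positivity)))
  refine ⟨m * 2 ^ (e - f).toNat, ?_⟩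
  push_cast
  rw [← zpow_natCast, Int.toNat_of_nonneg (by omega), mul_assoc, ← zpow_add₀ two_ne_zero]
  ring_nf

lemma small_multiples_subset (ht : 1 ≤ t) {e : ℤ} (he1 : Emin < e) (he2 : e ≤ Emax) :
    ({0, (2 : ℝ) ^ (e - 1), -(2 : ℝ) ^ (e - 1), (2 : ℝ) ^ e, -(2 : ℝ) ^ e} : Set ℝ) ⊆
      Dekker 2 t Emin Emax := by
  have hP : (2 : ℝ) ^ (e - 1) ∈ Dekker 2 t Emin Emax := two_zpow_mem ht (by omega) (by omega)
  have hU : (2 : ℝ) ^ e ∈ Dekker 2 t Emin Emax := two_zpow_mem ht he1.le he2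
  simp only [Set.insert_subset_iff, Set.singleton_subset_iff]
  exact ⟨⟨0, e, by positivity, he1.le, he2, by simp⟩, hP, neg_mem_s12 hP, hU, neg_mem_s12 hU⟩

end Dekker

theorem dekker_half_interval_difference_general
    (t : ℕ) (Emin Emax : ℤ)
    (fl : ℝ → ℝ)
    (hmem : ∀ x, fl x ∈ Dekker 2 t Emin Emax)
    (hnear : ∀ x, ∀ a ∈ Dekker 2 t Emin Emax, |fl x - x| ≤ |a - x|)
    (my ey : ℤ) (hmy1 : 2 ^ (t - 1) ≤ |my|) (hmy2 : |my| < 2 ^ t)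
    (hey1 : Emin < ey) (hey2 : ey ≤ Emax)
    (y : ℝ) (hy : y = (my : ℝ) * (2 : ℝ) ^ ey)
    (wt : ℝ) (hw1 : y - (2 : ℝ) ^ (ey - 1) ≤ wt) (hw2 : wt ≤ y + (2 : ℝ) ^ (ey - 1)) :
    y - fl wt ∈
        ({0, (2 : ℝ) ^ (ey - 1), -(2 : ℝ) ^ (ey - 1), (2 : ℝ) ^ ey, -(2 : ℝ) ^ ey} : Set ℝ) ∧
      y - fl wt ∈ Dekker 2 t Emin Emax := by
  have ht : 1 ≤ t := Nat.pos_of_ne_zero (by rintro rfl; exact lt_irrefl _ (hmy1.trans_lt hmy2))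
  set P : ℝ := 2 ^ (ey - 1) with hP
  have hP_pos : 0 < P := by positivity
  have hyP : y = (2 * my : ℤ) * P := by
    rw [hy, hP, zpow_sub_one₀ two_ne_zero]; push_cast; field_simp
  have hwy : |y - wt| ≤ P := abs_sub_le_iff.2 ⟨by linarith, by linarith⟩
  have hround : |fl wt - wt| ≤ P := (hnear wt y ⟨my, ey, hmy2, hey1.le, hey2, hy⟩).trans hwy
  have hlarge : (2 : ℝ) ^ (t - 1) * P ≤ |fl wt| := by
    have haD : (2 : ℝ) ^ (t - 1) * P ∈ Dekker 2 t Emin Emax :=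
      Dekker.two_pow_pred_mul_zpow_mem ht (by omega) (by omega)
    refine le_abs_of_nearer ?_ (hnear _ _ haD) (hnear _ _ (Dekker.neg_mem_s12 haD))
    have hmy : (2 : ℝ) ^ (t - 1) ≤ |(my : ℝ)| := by exact_mod_cast hmy1
    have hy_abs : |y| = 2 * |(my : ℝ)| * P := by
      rw [hyP]; push_cast; rw [abs_mul, abs_mul, abs_two, abs_of_pos hP_pos]
    nlinarith [abs_sub_abs_le_abs_sub y wt, one_le_pow₀ (n := t - 1) (one_le_two (α := ℝ))]
  obtain ⟨k, hk⟩ := Dekker.exists_int_mul_zpow_of_le_abs (hmem wt) hlarge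
  have hdiff : y - fl wt = ((2 * my - k : ℤ) : ℝ) * P := by rw [hyP, hk]; push_cast; ring
  have hj : |2 * my - k| ≤ 2 := by
    have hclose : |y - fl wt| ≤ 2 * P := by
      linarith [abs_sub_le y wt (fl wt), abs_sub_comm wt (fl wt)]
    rw [hdiff, abs_mul, abs_of_pos hP_pos] at hclose
    exact_mod_cast le_of_mul_le_mul_right hclose hP_pos
  have hS := int_mul_zpow_sub_one_mem_of_abs_le_two ey _ hj
  rw [hdiff]
  exact ⟨hS, Dekker.small_multiples_subset ht hey1 hey2 hS⟩

/-- for normal y and w̃ within half an ulp-scale interval around y,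
y − fl(w̃) takes only the values 0, ±2^{e(y)-1}, ±2^{e(y)}, and lies in D. -/
theorem dekker_half_interval_difference
    (t : ℕ) (Emin Emax : ℤ) (ht : 1 ≤ t)
    (fl : ℝ → ℝ)
    (hmem : ∀ x, fl x ∈ Dekker 2 t Emin Emax)
    (hnear : ∀ x, ∀ a ∈ Dekker 2 t Emin Emax, |fl x - x| ≤ |a - x|)
    (my ey : ℤ) (hmy1 : 2 ^ (t - 1) ≤ |my|) (hmy2 : |my| < 2 ^ t)
    (hey1 : Emin < ey) (hey2 : ey ≤ Emax)
    (y : ℝ) (hy : y = (my : ℝ) * (2 : ℝ) ^ ey)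
    (wt : ℝ) (hw1 : y - (2 : ℝ) ^ (ey - 1) ≤ wt) (hw2 : wt ≤ y + (2 : ℝ) ^ (ey - 1)) :
    y - fl wt ∈
        ({0, (2 : ℝ) ^ (ey - 1), -(2 : ℝ) ^ (ey - 1), (2 : ℝ) ^ ey, -(2 : ℝ) ^ ey} : Set ℝ) ∧
      y - fl wt ∈ Dekker 2 t Emin Emax :=
  dekker_half_interval_difference_general t Emin Emax fl hmem hnear my ey hmy1 hmy2 hey1 hey2 y hy
    wt hw1 hw2
end

section
/- For x, y ∈ D with z̃ = x + y satisfying |z̃| ≤ (β^t − 1)·β^{E_max}, and z = fl(z̃) under nearest rounding, one has both |z − z̃| ≤ (1/2)·β^{e(z)} for any valid representation z = m(z)·β^{e(z)}, and |z − z̃| ≤ ε·|z|, with no exception for subnormal z. -/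
section Aux

variable (β : ℤ) (t : ℕ) (Emin Emax : ℤ)

/-- If a number admits a representation with mantissa of absolute value exactly `β^t`,
it also lies in Dekker provided the exponent can be bumped. -/
lemma dekker_mem_of_pow_mantissa (hβ : 2 ≤ β) (ht : 1 ≤ t) (m e : ℤ)
    (hm : |m| = β ^ t) (h1 : Emin ≤ e) (h2 : e + 1 ≤ Emax) :
    (m : ℝ) * (β : ℝ) ^ e ∈ Dekker β t Emin Emax := by
  have hβ0 : (0:ℤ) < β := by omega
  have hb0 : ((β:ℝ)) ≠ 0 := by exact_mod_cast hβ0.ne'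
  have hpow : ((β:ℝ)) ^ t = (β:ℝ) ^ (t - 1) * β := by
    conv_lhs => rw [show t = (t-1) + 1 by omega]
    rw [pow_succ]
  rcases (abs_eq (by positivity : (0:ℤ) ≤ β ^ t)).mp hm with h | h
  · refine ⟨β ^ (t-1), e + 1, ?_, by omega, h2, ?_⟩
    · rw [abs_of_nonneg (by positivity)]
      exact pow_lt_pow_right₀ (by omega) (by omega)
    · rw [h, zpow_add₀ hb0, zpow_one]
      push_cast
      rw [hpow]
      ring
  · refine ⟨-(β ^ (t-1)), e + 1, ?_, by omega, h2, ?_⟩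
    · rw [abs_neg, abs_of_nonneg (by positivity)]
      exact pow_lt_pow_right₀ (by omega) (by omega)
    · rw [h, zpow_add₀ hb0, zpow_one]
      push_cast
      rw [hpow]
      ring

/-- Part (1) : any valid representation of the rounded value bounds the rounding error
by half a unit in the last place of that representation. -/
lemma dekker_round_half_ulp (hβ : 2 ≤ β) (ht : 1 ≤ t)
    (fl : ℝ → ℝ)
    (hnear : ∀ x, ∀ a ∈ Dekker β t Emin Emax, |fl x - x| ≤ |a - x|)
    (z : ℝ) (hov : |z| ≤ ((β ^ t - 1 : ℤ) : ℝ) * (β : ℝ) ^ Emax)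
    (mz ez : ℤ) (hm : |mz| < β ^ t) (h1 : Emin ≤ ez) (h2 : ez ≤ Emax)
    (heq : fl z = (mz : ℝ) * (β : ℝ) ^ ez) :
    |fl z - z| ≤ (1 / 2) * (β : ℝ) ^ ez := by
  by_contra hcon
  push_neg at hcon
  have hb1 : (1:ℝ) < (β:ℝ) := by exact_mod_cast (by omega : (1:ℤ) < β)
  have hb0 : (0:ℝ) < (β:ℝ) := lt_trans one_pos hb1
  set d : ℝ := fl z - z with hd
  set g : ℝ := (β:ℝ) ^ ez with hg
  have hgpos : 0 < g := zpow_pos hb0 ez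
  have hdg : (1/2) * g < |d| := hcon
  set s : ℤ := if 0 ≤ d then 1 else -1 with hs
  have hsd : (s:ℝ) * d = |d| := by
    by_cases h : 0 ≤ d
    · simp [hs, h, abs_of_nonneg h]
    · simp [hs, h, abs_of_neg (lt_of_not_ge h)]
  have hs1 : s = 1 ∨ s = -1 := by
    by_cases h : 0 ≤ d <;> simp [hs, h]
  -- mantissa of candidate
  have hmz' : |mz - s| ≤ β ^ t := by
    have habs_s : |s| = 1 := by rcases hs1 with h | h <;> simp [h]
    calc |mz - s| ≤ |mz| + |s| := abs_sub _ _
      _ ≤ (β ^ t - 1) + 1 := by omega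
      _ = β ^ t := by ring
  -- the candidate value is strictly closer
  have hclose : |((mz - s : ℤ) : ℝ) * g - z| < |d| := by
    have heq2 : ((mz - s : ℤ) : ℝ) * g - z = d - (s:ℝ) * g := by
      rw [hd, heq]; push_cast; ring
    rw [heq2]
    have hs2 : ((s:ℝ))^2 = 1 := by rcases hs1 with h | h <;> simp [h]
    have hsq : |d - (s:ℝ)*g| ^ 2 < |d| ^ 2 := by
      rw [sq_abs, sq_abs]
      have key : (d - (s:ℝ)*g)^2 = d^2 - 2 * |d| * g + g^2 := by
        have expand : (d - (s:ℝ)*g)^2 = d^2 - 2 * ((s:ℝ) * d) * g + ((s:ℝ))^2 * g^2 := by ring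
        rw [expand, hsd, hs2]; ring
      rw [key]
      nlinarith [hdg, hgpos]
    exact (pow_lt_pow_iff_left₀ (abs_nonneg _) (abs_nonneg _) (by norm_num)).mp hsq
  have hamem : ((mz - s : ℤ) : ℝ) * g ∈ Dekker β t Emin Emax := by
    rcases lt_or_eq_of_le hmz' with h | h
    · exact ⟨mz - s, ez, h, h1, h2, rfl⟩
    · -- |mz - s| = β^t
      rcases lt_or_eq_of_le h2 with hlt | hEmax
      · exact dekker_mem_of_pow_mantissa β t Emin Emax hβ ht _ _ h h1 (by omega)
      · exfalso
        have hmle : mz ≤ |mz| := le_abs_self mz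
        have hmge : -mz ≤ |mz| := neg_le_abs mz
        rcases (abs_eq (by positivity : (0:ℤ) ≤ β ^ t)).mp h with hc | hc
        · -- mz - s = β^t, so s = -1, mz = β^t - 1, d < 0
          have hsneg : s = -1 := by
            rcases hs1 with h' | h'
            · exfalso; rw [h'] at hc; linarith
            · exact h'
          have hmzval : mz = β ^ t - 1 := by rw [hsneg] at hc; linarith
          have hdneg : ¬ (0 ≤ d) := by
            intro h'
            rw [hs] at hsneg; simp [h'] at hsneg
          have habs : |d| = -d := abs_of_neg (lt_of_not_ge hdneg)
          have hzval : z = ((β ^ t - 1 : ℤ) : ℝ) * g - d := by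
            rw [hd, heq, hmzval]; ring
          have hzgt : ((β ^ t - 1 : ℤ) : ℝ) * g < z := by
            rw [hzval]
            nlinarith [hdg, hgpos]
          have hzabs : z ≤ |z| := le_abs_self z
          rw [hEmax] at hg
          rw [← hg] at hov
          linarith
        · -- mz - s = -β^t, so s = 1, mz = -(β^t - 1), d > 0
          have hspos : s = 1 := by
            rcases hs1 with h' | h'
            · exact h'
            · exfalso; rw [h'] at hc; linarith
          have hmzval : mz = -(β ^ t - 1) := by rw [hspos] at hc; linarith
          have hdpos : 0 ≤ d := by
            by_contra h'
            rw [hs] at hspos; simp [h'] at hspos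
          have habs : |d| = d := abs_of_nonneg hdpos
          have hzval : z = -(((β ^ t - 1 : ℤ) : ℝ) * g) - d := by
            rw [hd, heq, hmzval]; push_cast; ring
          have hzlt : z < -(((β ^ t - 1 : ℤ) : ℝ) * g) := by
            rw [hzval]
            nlinarith [hdg, hgpos]
          have hzabs : -z ≤ |z| := neg_le_abs z
          rw [hEmax] at hg
          rw [← hg] at hov
          linarith
  have hle := hnear z _ hamem
  rw [← hd] at hle
  exact absurd (lt_of_le_of_lt hle hclose) (lt_irrefl _)

end Aux

/-- for addition, the rounding error bounds hold with no exception
for subnormal results; ε = (1/2)·β^{1−t}. -/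
theorem dekker_addition_rounding_error_output_bound
    (β : ℤ) (t : ℕ) (Emin Emax : ℤ) (hβ : 2 ≤ β) (ht : 1 ≤ t)
    (fl : ℝ → ℝ)
    (hmem : ∀ x, fl x ∈ Dekker β t Emin Emax)
    (hnear : ∀ x, ∀ a ∈ Dekker β t Emin Emax, |fl x - x| ≤ |a - x|)
    (x y : ℝ) (hx : x ∈ Dekker β t Emin Emax) (hy : y ∈ Dekker β t Emin Emax)
    (hov : |x + y| ≤ ((β ^ t - 1 : ℤ) : ℝ) * (β : ℝ) ^ Emax) :
    (∀ mz ez : ℤ, |mz| < β ^ t → Emin ≤ ez → ez ≤ Emax →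
        fl (x + y) = (mz : ℝ) * (β : ℝ) ^ ez →
        |fl (x + y) - (x + y)| ≤ (1 / 2) * (β : ℝ) ^ ez) ∧
      |fl (x + y) - (x + y)| ≤ (1 / 2) * (β : ℝ) ^ (1 - (t : ℤ)) * |fl (x + y)| := by
  have hb1 : (1:ℝ) < (β:ℝ) := by exact_mod_cast (by omega : (1:ℤ) < β)
  have hb0 : (0:ℝ) < (β:ℝ) := lt_trans one_pos hb1
  have hbne : ((β:ℝ)) ≠ 0 := hb0.ne'
  constructor
  · intro mz ez hm h1 h2 heq
    exact dekker_round_half_ulp β t Emin Emax hβ ht fl hnear (x+y) hov mz ez hm h1 h2 heq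
  -- Part 2
  obtain ⟨mx, ex, hmx, hex1, hex2, hxe⟩ := hx
  obtain ⟨my, ey, hmy, hey1, hey2, hye⟩ := hy
  set e : ℤ := min ex ey with he
  have he1 : Emin ≤ e := le_min hex1 hey1
  have he2 : e ≤ Emax := le_trans (min_le_left _ _) hex2
  set M : ℤ := mx * β ^ (ex - e).toNat + my * β ^ (ey - e).toNat with hM
  have hxnn : (0:ℤ) ≤ ex - e := sub_nonneg.mpr (min_le_left ex ey)
  have hynn : (0:ℤ) ≤ ey - e := sub_nonneg.mpr (min_le_right ex ey)
  have hkx : ((β:ℝ)) ^ ((ex - e).toNat) * (β:ℝ) ^ e = (β:ℝ) ^ ex := by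
    rw [← zpow_natCast (β:ℝ), Int.toNat_of_nonneg hxnn, ← zpow_add₀ hbne, sub_add_cancel]
  have hky : ((β:ℝ)) ^ ((ey - e).toNat) * (β:ℝ) ^ e = (β:ℝ) ^ ey := by
    rw [← zpow_natCast (β:ℝ), Int.toNat_of_nonneg hynn, ← zpow_add₀ hbne, sub_add_cancel]
  have hMz : ((M:ℝ)) * (β:ℝ) ^ e = x + y := by
    rw [hM, hxe, hye]
    push_cast
    rw [add_mul, mul_assoc, mul_assoc, hkx, hky]
  by_cases hMsmall : |M| < β ^ t
  · -- exact case: x + y ∈ Dekker, so fl (x+y) = x+y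
    have hzmem : x + y ∈ Dekker β t Emin Emax := ⟨M, e, hMsmall, he1, he2, hMz.symm⟩
    have h0 : |fl (x+y) - (x+y)| ≤ 0 := by
      simpa using hnear (x+y) (x+y) hzmem
    refine le_trans h0 ?_
    positivity
  · -- generic case
    push_neg at hMsmall
    set B : ℕ := β.toNat with hB
    have hBcast : ((B:ℤ)) = β := Int.toNat_of_nonneg (by omega)
    have hB1 : 1 < B := by omega
    set N : ℕ := M.natAbs with hN
    have hNcast : ((N:ℤ)) = |M| := (Int.abs_eq_natAbs M).symm
    have hN0 : N ≠ 0 := by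
      intro h
      rw [h] at hNcast
      have : (0:ℤ) < β ^ t := by positivity
      omega
    have hBN : B ^ t ≤ N := by
      have : (B:ℤ) ^ t ≤ (N:ℤ) := by rw [hBcast, hNcast]; exact hMsmall
      exact_mod_cast this
    set j : ℕ := Nat.log B N with hj
    have hjt : t ≤ j := (Nat.le_log_iff_pow_le hB1 hN0).mpr hBN
    have hjlow : B ^ j ≤ N := Nat.pow_log_le_self B hN0
    have hjhigh : N < B ^ (j + 1) := Nat.lt_pow_succ_log_self hB1 N
    set p : ℕ := j + 1 - t with hp
    have hp1 : 1 ≤ p := by omega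
    have hjp : j = t + p - 1 := by omega
    set ez : ℤ := e + p with hez
    have hez1 : Emin ≤ ez := by
      have : (0:ℤ) ≤ (p:ℤ) := by positivity
      omega
    -- basic real facts
    have hMabs : |((M:ℝ))| = (N:ℝ) := by
      rw [← Int.cast_abs, ← hNcast]; norm_num
    have hzabs : |x + y| = (N:ℝ) * (β:ℝ) ^ e := by
      rw [← hMz, abs_mul, hMabs, abs_of_pos (zpow_pos hb0 e)]
    have hNlow : ((β:ℝ)) ^ (j:ℤ) ≤ (N:ℝ) := by
      have h' : ((B:ℝ)) ^ j ≤ (N:ℝ) := by exact_mod_cast hjlow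
      rw [zpow_natCast]
      calc ((β:ℝ)) ^ (j:ℕ) = ((B:ℝ)) ^ j := by
            congr 1
            exact_mod_cast hBcast.symm
        _ ≤ (N:ℝ) := h'
    have hNhigh : (N:ℝ) < ((β:ℝ)) ^ ((j:ℤ) + 1) := by
      have h' : (N:ℝ) < ((B:ℝ)) ^ (j+1) := by exact_mod_cast hjhigh
      have : ((β:ℝ)) ^ ((j:ℤ)+1) = ((B:ℝ)) ^ (j+1) := by
        rw [show ((j:ℤ)+1) = ((j+1 : ℕ) : ℤ) by push_cast; ring, zpow_natCast]
        congr 1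
        exact_mod_cast hBcast.symm
      rw [this]; exact h'
    have hzlow : (β:ℝ) ^ ((t:ℤ) - 1) * (β:ℝ) ^ ez ≤ |x + y| := by
      rw [hzabs, ← zpow_add₀ hbne]
      have hexp : (t:ℤ) - 1 + ez = (j:ℤ) + e := by
        rw [hez]; push_cast; omega
      rw [hexp, zpow_add₀ hbne]
      exact mul_le_mul_of_nonneg_right hNlow (zpow_pos hb0 e).le
    have hzhigh : |x + y| < (β:ℝ) ^ (t:ℤ) * (β:ℝ) ^ ez := by
      rw [hzabs, ← zpow_add₀ hbne]
      have hexp : (t:ℤ) + ez = ((j:ℤ) + 1) + e := by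
        rw [hez]; push_cast; omega
      rw [hexp, zpow_add₀ hbne]
      exact mul_lt_mul_of_pos_right hNhigh (zpow_pos hb0 e)
    -- ez ≤ Emax
    have hez2 : ez ≤ Emax := by
      have h1 : (β:ℝ) ^ ((t:ℤ) - 1) * (β:ℝ) ^ ez ≤ ((β ^ t - 1 : ℤ) : ℝ) * (β : ℝ) ^ Emax :=
        le_trans hzlow hov
      have h2 : ((β ^ t - 1 : ℤ) : ℝ) < (β:ℝ) ^ (t:ℤ) := by
        push_cast
        rw [zpow_natCast]
        linarith
      have h3 : (β:ℝ) ^ ((t:ℤ) - 1 + ez) < (β:ℝ) ^ ((t:ℤ) + Emax) := by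
        rw [zpow_add₀ hbne, zpow_add₀ hbne ((t:ℤ))]
        calc (β:ℝ) ^ ((t:ℤ)-1) * (β:ℝ) ^ ez ≤ ((β ^ t - 1 : ℤ) : ℝ) * (β : ℝ) ^ Emax := h1
          _ < (β:ℝ) ^ (t:ℤ) * (β:ℝ) ^ Emax :=
            mul_lt_mul_of_pos_right h2 (zpow_pos hb0 Emax)
      have := (zpow_lt_zpow_iff_right₀ hb1).mp h3
      omega
    -- rounding candidate
    set Pz : ℝ := (β:ℝ) ^ (p:ℕ) with hPz
    have hPzpos : 0 < Pz := by positivity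
    set m : ℤ := round ((M:ℝ) / Pz) with hm
    have hround : |(m:ℝ) - (M:ℝ)/Pz| ≤ 1/2 := by
      rw [abs_sub_comm]; exact abs_sub_round _
    have herr : |(m:ℝ) * Pz - (M:ℝ)| ≤ Pz / 2 := by
      have : (m:ℝ) * Pz - (M:ℝ) = ((m:ℝ) - (M:ℝ)/Pz) * Pz := by
        field_simp
      rw [this, abs_mul, abs_of_pos hPzpos]
      calc |(m:ℝ) - (M:ℝ)/Pz| * Pz ≤ (1/2) * Pz :=
            mul_le_mul_of_nonneg_right hround hPzpos.le
        _ = Pz / 2 := by ring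
    have hPze : Pz * (β:ℝ) ^ e = (β:ℝ) ^ ez := by
      rw [hPz, hez, ← zpow_natCast (β:ℝ), ← zpow_add₀ hbne]
      ring_nf
    have hadist : |(m:ℝ) * (β:ℝ) ^ ez - (x + y)| ≤ (1/2) * (β:ℝ) ^ ez := by
      have heq' : (m:ℝ) * (β:ℝ) ^ ez - (x + y) = ((m:ℝ) * Pz - (M:ℝ)) * (β:ℝ) ^ e := by
        rw [← hMz, ← hPze]; ring
      rw [heq', abs_mul, abs_of_pos (zpow_pos hb0 e)]
      calc |(m:ℝ) * Pz - (M:ℝ)| * (β:ℝ) ^ e ≤ (Pz/2) * (β:ℝ) ^ e :=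
            mul_le_mul_of_nonneg_right herr (zpow_pos hb0 e).le
        _ = (1/2) * (Pz * (β:ℝ) ^ e) := by ring
        _ = (1/2) * (β:ℝ) ^ ez := by rw [hPze]
    -- mantissa bound
    have hmle : |m| ≤ β ^ t := by
      have hcast : ((|m| : ℤ) : ℝ) = |(m:ℝ)| := by push_cast; ring
      have h1 : |(m:ℝ)| * Pz ≤ Pz/2 + (N:ℝ) := by
        have := abs_sub_abs_le_abs_sub ((m:ℝ) * Pz) ((M:ℝ))
        rw [abs_mul, abs_of_pos hPzpos, hMabs] at this
        linarith [le_trans this herr]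
      have h2 : (N:ℝ) < (β:ℝ) ^ (t:ℤ) * Pz := by
        have : ((β:ℝ)) ^ ((j:ℤ) + 1) = (β:ℝ) ^ (t:ℤ) * Pz := by
          rw [hPz, ← zpow_natCast (β:ℝ) p, ← zpow_add₀ hbne]
          congr 1
          push_cast
          omega
        rw [← this]; exact hNhigh
      have h3 : |(m:ℝ)| * Pz < ((β:ℝ) ^ (t:ℤ) + 1) * Pz := by
        calc |(m:ℝ)| * Pz ≤ Pz/2 + (N:ℝ) := h1
          _ < Pz/2 + (β:ℝ) ^ (t:ℤ) * Pz := by linarith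
          _ ≤ ((β:ℝ) ^ (t:ℤ) + 1) * Pz := by nlinarith [hPzpos]
      have h4 : |(m:ℝ)| < (β:ℝ) ^ (t:ℤ) + 1 := lt_of_mul_lt_mul_right h3 hPzpos.le
      have h5 : ((|m| : ℤ) : ℝ) < (((β ^ t + 1 : ℤ)) : ℝ) := by
        rw [hcast]
        push_cast
        rw [zpow_natCast] at h4
        exact h4
      have h6 : |m| < β ^ t + 1 := by exact_mod_cast h5
      omega
    -- candidate membership
    have hamem : (m:ℝ) * (β:ℝ) ^ ez ∈ Dekker β t Emin Emax := by
      rcases lt_or_eq_of_le hmle with h | h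
      · exact ⟨m, ez, h, hez1, hez2, rfl⟩
      · -- |m| = β^t; show ez < Emax then bump exponent
        have hezlt : ez + 1 ≤ Emax := by
          rcases lt_or_eq_of_le hez2 with h' | h'
          · omega
          · exfalso
            have hmabs2 : ((|m| : ℤ) : ℝ) = |(m:ℝ)| := by push_cast; ring
            have hmr : |(m:ℝ)| = (((β ^ t : ℤ)) : ℝ) := by
              rw [← hmabs2, h]
            have hma : |(m:ℝ) * (β:ℝ) ^ ez| = (β:ℝ) ^ (t:ℤ) * (β:ℝ) ^ ez := by
              rw [abs_mul, abs_of_pos (zpow_pos hb0 ez), hmr]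
              congr 1
              push_cast
              rw [zpow_natCast]
            have htri := abs_sub_abs_le_abs_sub ((m:ℝ) * (β:ℝ) ^ ez) (x + y)
            have hge : (β:ℝ) ^ (t:ℤ) * (β:ℝ) ^ ez - (1/2) * (β:ℝ) ^ ez ≤ |x + y| := by
              rw [hma] at htri
              linarith [le_trans htri hadist]
            have hpos := zpow_pos hb0 ez
            have hbt : ((β ^ t - 1 : ℤ) : ℝ) = (β:ℝ) ^ (t:ℤ) - 1 := by
              push_cast; rw [zpow_natCast]
            rw [h'] at hpos hge
            rw [hbt] at hov
            have hexp : ((β:ℝ) ^ (t:ℤ) - 1) * (β:ℝ) ^ Emax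
                = (β:ℝ) ^ (t:ℤ) * (β:ℝ) ^ Emax - (β:ℝ) ^ Emax := by ring
            rw [hexp] at hov
            linarith
        have hma : (m:ℝ) * (β:ℝ) ^ ez ∈ Dekker β t Emin Emax :=
          dekker_mem_of_pow_mantissa β t Emin Emax hβ ht m ez h hez1 hezlt
        exact hma
    -- rounding error bound
    have herr2 : |fl (x+y) - (x+y)| ≤ (1/2) * (β:ℝ) ^ ez :=
      le_trans (hnear (x+y) _ hamem) hadist
    -- fl (x+y) is large: |fl (x+y)| ≥ β^(t-1) * β^ez
    have hflge : (β:ℝ) ^ ((t:ℤ) - 1) * (β:ℝ) ^ ez ≤ |fl (x+y)| := by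
      by_contra hlt
      push_neg at hlt
      set T : ℝ := (β:ℝ) ^ ((t:ℤ) - 1) * (β:ℝ) ^ ez with hT
      have hTpos : 0 < T := by positivity
      have hzne : x + y ≠ 0 := by
        intro h0
        rw [h0, abs_zero] at hzlow
        linarith
      set c : ℝ := if 0 ≤ x + y then 1 else -1 with hc
      have hcz : c * (x + y) = |x + y| := by
        by_cases h' : 0 ≤ x + y
        · simp [hc, h', abs_of_nonneg h']
        · simp [hc, h', abs_of_neg (lt_of_not_ge h')]
      have hcabs : |c| = 1 := by
        by_cases h' : 0 ≤ x + y <;> simp [hc, h']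
      -- candidate C = c * T ∈ Dekker
      have hCmem : c * T ∈ Dekker β t Emin Emax := by
        set ci : ℤ := if 0 ≤ x + y then 1 else -1 with hci
        refine ⟨ci * β ^ (t - 1), ez, ?_, hez1, hez2, ?_⟩
        · have : |ci| = 1 := by by_cases h' : 0 ≤ x + y <;> simp [hci, h']
          rw [abs_mul, this, one_mul, abs_of_nonneg (by positivity)]
          exact pow_lt_pow_right₀ (by omega) (by omega)
        · have hcic : ((ci:ℤ):ℝ) = c := by
            by_cases h' : 0 ≤ x + y <;> simp [hci, hc, h']
          have hpowc : ((β:ℤ) ^ (t-1) : ℤ) = β ^ (t-1) := rfl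
          have : (((ci * β ^ (t - 1) : ℤ)) : ℝ) = c * (β:ℝ) ^ ((t:ℤ) - 1) := by
            push_cast
            rw [hcic]
            congr 1
            rw [← zpow_natCast (β:ℝ)]
            congr 1
            omega
          rw [this, hT]
          ring
      have hCnear := hnear (x+y) _ hCmem
      -- |C - (x+y)| = c(x+y) - T
      have hTz : T ≤ c * (x + y) := by rw [hcz]; exact hzlow
      have hCdist : |c * T - (x + y)| = c * (x + y) - T := by
        have hc2 : c * c = 1 := by
          by_cases h' : 0 ≤ x + y <;> simp [hc, h']
        have : c * T - (x + y) = -(c * (c * (x+y) - T)) := by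
          have : c * (c * (x+y)) = (c * c) * (x+y) := by ring
          rw [show -(c * (c * (x+y) - T)) = -(c * (c * (x+y))) + c * T by ring,
              this, hc2]
          ring
        rw [this, abs_neg, abs_mul, hcabs, one_mul, abs_of_nonneg (by linarith)]
      -- |fl - z| ≥ c z - |fl| > c z - T
      have hflz : c * (x+y) - c * fl (x+y) ≤ |fl (x+y) - (x+y)| := by
        have h1 : c * ((x+y) - fl (x+y)) ≤ |c * ((x+y) - fl (x+y))| := le_abs_self _
        rw [abs_mul, hcabs, one_mul, abs_sub_comm] at h1
        linarith [h1]
      have hcfl : c * fl (x+y) ≤ |fl (x+y)| := by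
        calc c * fl (x+y) ≤ |c * fl (x+y)| := le_abs_self _
          _ = |fl (x+y)| := by rw [abs_mul, hcabs, one_mul]
      rw [hCdist] at hCnear
      linarith
    -- conclude
    have hfin : (β:ℝ) ^ (1 - (t:ℤ)) * ((β:ℝ) ^ ((t:ℤ) - 1) * (β:ℝ) ^ ez) = (β:ℝ) ^ ez := by
      rw [← zpow_add₀ hbne, ← zpow_add₀ hbne]
      congr 1
      ring
    have hpow1t : (0:ℝ) < (β:ℝ) ^ (1 - (t:ℤ)) := zpow_pos hb0 _
    calc |fl (x + y) - (x + y)| ≤ (1/2) * (β:ℝ) ^ ez := herr2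
      _ = (1/2) * ((β:ℝ) ^ (1 - (t:ℤ)) * ((β:ℝ) ^ ((t:ℤ) - 1) * (β:ℝ) ^ ez)) := by
          rw [hfin]
      _ ≤ (1/2) * ((β:ℝ) ^ (1 - (t:ℤ)) * |fl (x+y)|) := by
          have := mul_le_mul_of_nonneg_left hflge hpow1t.le
          linarith
      _ = 1 / 2 * (β:ℝ) ^ (1 - (t:ℤ)) * |fl (x+y)| := by ring
end

section
/- For the 6op-compensated recursive summation with per-step relative errors α_i, β_i (|α_i|, |β_i| ≤ ε), the running pair satisfies the exact identity s_n + e_n = Σ_{k=1}^n [∏_{i=k+1}^n (1 − α_i β_{i-1})] (1 + α_k) x_k, where empty products equal 1 and β_0 = 0. -/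
/-- exact error characterization of 6op-compensated recursive summation. -/
theorem compensated_sum_6op_characterization
    (n : ℕ) (ε : ℝ) (hε : 0 < ε)
    (x y s e α b : ℕ → ℝ)
    (hα : ∀ i, |α i| ≤ ε) (hb : ∀ i, |b i| ≤ ε) (hb0 : b 0 = 0)
    (hs0 : s 0 = 0) (he0 : e 0 = 0)
    (hy : ∀ i, 1 ≤ i → i ≤ n → y i = (1 + α i) * (e (i - 1) + x i))
    (hs : ∀ i, 1 ≤ i → i ≤ n → s i = (1 + b i) * (s (i - 1) + y i))
    (he : ∀ i, 1 ≤ i → i ≤ n → e i = -(b i) * (s (i - 1) + y i)) :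
    s n + e n = ∑ k ∈ Finset.Icc 1 n,
      (∏ i ∈ Finset.Icc (k + 1) n, (1 - α i * b (i - 1))) * ((1 + α k) * x k) := by
  -- key identity: s i + e i = s (i-1) + y i for 1 ≤ i ≤ n
  have hT : ∀ i, 1 ≤ i → i ≤ n → s i + e i = s (i - 1) + y i := by
    intro i h1 h2
    rw [hs i h1 h2, he i h1 h2]; ring
  -- e m = -(b m) * (s m + e m) for m ≤ n
  have hE : ∀ m, m ≤ n → e m = -(b m) * (s m + e m) := by
    intro m hm
    rcases Nat.eq_zero_or_pos m with h0 | h1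
    · subst h0; rw [he0, hb0]; ring
    · rw [hT m h1 hm, he m h1 hm]
  have main : ∀ m, m ≤ n → s m + e m = ∑ k ∈ Finset.Icc 1 m,
      (∏ i ∈ Finset.Icc (k + 1) m, (1 - α i * b (i - 1))) * ((1 + α k) * x k) := by
    intro m
    induction m with
    | zero => intro _; simp [hs0, he0]
    | succ m ih =>
      intro hm
      have hmn : m ≤ n := le_of_lt (Nat.lt_of_lt_of_le (Nat.lt_succ_self m) hm)
      have h1 : 1 ≤ m + 1 := Nat.succ_le_succ (Nat.zero_le m)
      have step : s (m + 1) + e (m + 1) =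
          (s m + e m) * (1 - α (m + 1) * b m) + (1 + α (m + 1)) * x (m + 1) := by
        rw [hT (m + 1) h1 hm, hy (m + 1) h1 hm]
        simp only [Nat.add_sub_cancel]
        linear_combination (α (m + 1)) * hE m hmn
      rw [step, ih hmn, Finset.sum_Icc_succ_top h1]
      have hemp : (∏ i ∈ Finset.Icc (m + 1 + 1) (m + 1), (1 - α i * b (i - 1))) = 1 := by
        rw [Finset.Icc_eq_empty (by omega)]; simp
      rw [hemp, one_mul, Finset.sum_mul]
      congr 1
      apply Finset.sum_congr rfl
      intro k hk
      have hk' : k + 1 ≤ m + 1 := by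
        have := (Finset.mem_Icc.mp hk).2; omega
      rw [Finset.prod_Icc_succ_top hk']
      simp only [Nat.add_sub_cancel]
      ring
  exact main n le_rfl
end

section
/- For the double-6op-compensated recursive summation with per-step relative errors α_i, β_i, γ_i (all bounded by ε in absolute value, γ_0 = 0), the exact identity s_n + e_n = Σ_{k=1}^n [∏_{i=k+1}^n (1 − α_i β_i − β_i γ_{i-1} − α_i β_i γ_{i-1})] (1 − α_k β_k) x_k holds, and consequently |s_n + e_n − Σ_k x_k| ≤ τ·Σ_k|x_k| + ((n−1)σ/(1−(n−1)σ))·(1+τ)·Σ_k|x_k|, where τ = ε² and σ = 2ε² + ε³, provided (n−1)σ < 1. -/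
open Finset

lemma csd6_div_mono {a y : ℝ} (ha : 0 ≤ a) (hay : a ≤ y) (hy : y < 1) :
    a / (1 - a) ≤ y / (1 - y) := by
  have h1 : 0 < 1 - y := by linarith
  have h2 : 0 < 1 - a := by linarith
  rw [div_le_div_iff₀ h2 h1]
  nlinarith

lemma csd6_prod_err (σ : ℝ) (hσ : 0 ≤ σ) (a : ℕ → ℝ) (F : Finset ℕ)
    (h : ∀ i ∈ F, |a i - 1| ≤ σ) (hlt : (F.card : ℝ) * σ < 1) :
    |∏ i ∈ F, a i - 1| ≤ (F.card : ℝ) * σ / (1 - (F.card : ℝ) * σ) := by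
  induction F using Finset.cons_induction with
  | empty => simp
  | cons j G hj ih =>
      have hGF : (G.card : ℝ) ≤ ((Finset.cons j G hj).card : ℝ) := by
        rw [Finset.card_cons]; push_cast; linarith
      have hGlt : (G.card : ℝ) * σ < 1 :=
        lt_of_le_of_lt (mul_le_mul_of_nonneg_right hGF hσ) hlt
      have ihG := ih (fun i hi => h i (Finset.mem_cons_of_mem hi)) hGlt
      have hG2 : 0 < 1 - (G.card : ℝ) * σ := by
        have : 0 ≤ (G.card : ℝ) * σ := mul_nonneg (Nat.cast_nonneg _) hσ
        linarith
      have hja : |a j - 1| ≤ σ := h j (Finset.mem_cons_self j G)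
      have hcard : ((Finset.cons j G hj).card : ℝ) = (G.card : ℝ) + 1 := by
        rw [Finset.card_cons]; push_cast; ring
      rw [Finset.prod_cons, hcard]
      set P := ∏ i ∈ G, a i with hP
      have hPb : |P| ≤ 1 + (G.card : ℝ) * σ / (1 - (G.card : ℝ) * σ) := by
        calc |P| = |(P - 1) + 1| := by ring_nf
          _ ≤ |P - 1| + 1 := by
              have := abs_add_le (P - 1) 1
              simpa using this
          _ ≤ 1 + (G.card : ℝ) * σ / (1 - (G.card : ℝ) * σ) := by linarith
      have key : |a j * P - 1| ≤ ((G.card : ℝ) + 1) * σ / (1 - (G.card : ℝ) * σ) := by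
        have hsplit : a j * P - 1 = (a j - 1) * P + (P - 1) := by ring
        have h1 : |a j * P - 1| ≤ |a j - 1| * |P| + |P - 1| := by
          rw [hsplit]
          calc |(a j - 1) * P + (P - 1)| ≤ |(a j - 1) * P| + |P - 1| := abs_add_le _ _
            _ = |a j - 1| * |P| + |P - 1| := by rw [abs_mul]
        have h2 : |a j - 1| * |P| ≤ σ * (1 + (G.card : ℝ) * σ / (1 - (G.card : ℝ) * σ)) :=
          mul_le_mul hja hPb (abs_nonneg _) hσ
        have h3 : σ * (1 + (G.card : ℝ) * σ / (1 - (G.card : ℝ) * σ)) +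
            (G.card : ℝ) * σ / (1 - (G.card : ℝ) * σ) =
            ((G.card : ℝ) + 1) * σ / (1 - (G.card : ℝ) * σ) := by
          have hXD : (G.card : ℝ) * σ / (1 - (G.card : ℝ) * σ) * (1 - (G.card : ℝ) * σ) =
              (G.card : ℝ) * σ := div_mul_cancel₀ _ hG2.ne'
          rw [eq_div_iff hG2.ne']
          linear_combination (1 + σ) * hXD
        linarith
      have hmono : ((G.card : ℝ) + 1) * σ / (1 - (G.card : ℝ) * σ) ≤
          ((G.card : ℝ) + 1) * σ / (1 - ((G.card : ℝ) + 1) * σ) := by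
        have hlt' : ((G.card : ℝ) + 1) * σ < 1 := by rw [← hcard]; exact hlt
        have hpos : 0 < 1 - ((G.card : ℝ) + 1) * σ := by linarith
        have hnum : 0 ≤ ((G.card : ℝ) + 1) * σ :=
          mul_nonneg (by positivity) hσ
        apply div_le_div_of_nonneg_left hnum hpos
        nlinarith [mul_nonneg (Nat.cast_nonneg G.card : (0:ℝ) ≤ G.card) hσ]
      linarith

/-- exact error characterization and error bound of the
double-6op-compensated recursive summation. -/
theorem compensated_sum_double_6op_characterization_and_bound
    (n : ℕ) (ε : ℝ) (hε : 0 < ε)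
    (x t v w s e α b c : ℕ → ℝ)
    (hα : ∀ i, |α i| ≤ ε) (hb : ∀ i, |b i| ≤ ε) (hc : ∀ i, |c i| ≤ ε) (hc0 : c 0 = 0)
    (hs0 : s 0 = 0) (he0 : e 0 = 0)
    (ht : ∀ i, 1 ≤ i → i ≤ n → t i = (1 + α i) * (s (i - 1) + x i))
    (hv : ∀ i, 1 ≤ i → i ≤ n → v i = -(α i) * (s (i - 1) + x i))
    (hw : ∀ i, 1 ≤ i → i ≤ n → w i = (1 + b i) * (e (i - 1) + v i))
    (hs : ∀ i, 1 ≤ i → i ≤ n → s i = (1 + c i) * (t i + w i))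
    (he : ∀ i, 1 ≤ i → i ≤ n → e i = -(c i) * (t i + w i))
    (hσ : ((n : ℝ) - 1) * (2 * ε ^ 2 + ε ^ 3) < 1) :
    s n + e n = (∑ k ∈ Finset.Icc 1 n,
        (∏ i ∈ Finset.Icc (k + 1) n,
          (1 - α i * b i - b i * c (i - 1) - α i * b i * c (i - 1))) *
        ((1 - α k * b k) * x k)) ∧
      |s n + e n - ∑ k ∈ Finset.Icc 1 n, x k| ≤
        ε ^ 2 * ∑ k ∈ Finset.Icc 1 n, |x k| +
          (((n : ℝ) - 1) * (2 * ε ^ 2 + ε ^ 3) /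
              (1 - ((n : ℝ) - 1) * (2 * ε ^ 2 + ε ^ 3))) *
            (1 + ε ^ 2) * ∑ k ∈ Finset.Icc 1 n, |x k| := by
  set φ : ℕ → ℝ := fun i => 1 - α i * b i - b i * c (i - 1) - α i * b i * c (i - 1) with hφ
  -- e m = -c m * (s m + e m) for all m ≤ n
  have hE : ∀ m, m ≤ n → e m = -(c m) * (s m + e m) := by
    intro m hm
    match m with
    | 0 => simp [he0, hc0]
    | Nat.succ m' =>
        have h1 := hs (m' + 1) (Nat.succ_le_succ (Nat.zero_le _)) hm
        have h2 := he (m' + 1) (Nat.succ_le_succ (Nat.zero_le _)) hm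
        rw [h1, h2]; ring
  -- recurrence
  have hrec : ∀ m, m + 1 ≤ n →
      s (m + 1) + e (m + 1) = φ (m + 1) * (s m + e m) + (1 - α (m + 1) * b (m + 1)) * x (m + 1) := by
    intro m hm
    have h1 : 1 ≤ m + 1 := Nat.succ_le_succ (Nat.zero_le _)
    have hsm := hs (m + 1) h1 hm
    have hem := he (m + 1) h1 hm
    have htm := ht (m + 1) h1 hm
    have hwm := hw (m + 1) h1 hm
    have hvm := hv (m + 1) h1 hm
    have hsub : m + 1 - 1 = m := by omega
    rw [hsub] at htm hwm hvm
    have hEm := hE m (le_of_lt (Nat.lt_of_succ_le hm))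
    have hEm' : c m * s m + (1 + c m) * e m = 0 := by linarith [hEm]
    have hφm : φ (m + 1) = 1 - α (m + 1) * b (m + 1) - b (m + 1) * c m
        - α (m + 1) * b (m + 1) * c m := by
      simp only [hφ]; rw [hsub]
    rw [hsm, hem, htm, hwm, hvm, hφm]
    linear_combination (b (m + 1)) * (1 + α (m + 1)) * hEm'
  -- exact identity for all m ≤ n
  have key : ∀ m, m ≤ n → s m + e m =
      ∑ k ∈ Finset.Icc 1 m, (∏ i ∈ Finset.Icc (k + 1) m, φ i) * ((1 - α k * b k) * x k) := by
    intro m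
    induction m with
    | zero => intro _; simp [hs0, he0]
    | succ m ih =>
        intro hm
        have hm' : m ≤ n := le_of_lt (Nat.lt_of_succ_le hm)
        rw [hrec m hm, ih hm']
        rw [Finset.sum_Icc_succ_top (Nat.succ_le_succ (Nat.zero_le m))]
        have hempty : Finset.Icc (m + 1 + 1) (m + 1) = ∅ := by
          apply Finset.Icc_eq_empty
          omega
        rw [hempty, Finset.prod_empty, one_mul]
        congr 1
        rw [Finset.mul_sum]
        apply Finset.sum_congr rfl
        intro k hk
        have hk2 : k + 1 ≤ m + 1 := by
          have := (Finset.mem_Icc.mp hk).2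
          omega
        rw [Finset.prod_Icc_succ_top hk2]
        ring
  have keyn := key n le_rfl
  refine ⟨keyn, ?_⟩
  -- bound part
  rcases Nat.eq_zero_or_pos n with hn0 | hn1
  · subst hn0
    simp [hs0, he0]
  · have hn1' : (1 : ℝ) ≤ (n : ℝ) := by exact_mod_cast hn1
    set σ : ℝ := 2 * ε ^ 2 + ε ^ 3 with hσdef
    have hσ0 : 0 ≤ σ := by positivity
    have hnσ0 : 0 ≤ ((n : ℝ) - 1) * σ := mul_nonneg (by linarith) hσ0
    have hden : 0 < 1 - ((n : ℝ) - 1) * σ := by linarith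
    set δ : ℝ := ((n : ℝ) - 1) * σ / (1 - ((n : ℝ) - 1) * σ) with hδdef
    have hδ0 : 0 ≤ δ := div_nonneg hnσ0 (le_of_lt hden)
    -- per-term bound
    have hterm : ∀ k ∈ Finset.Icc 1 n,
        |(∏ i ∈ Finset.Icc (k + 1) n, φ i) * (1 - α k * b k) - 1| ≤ ε ^ 2 + δ * (1 + ε ^ 2) := by
      intro k hk
      obtain ⟨hk1, hkn⟩ := Finset.mem_Icc.mp hk
      have hcard : ((Finset.Icc (k + 1) n).card : ℝ) ≤ (n : ℝ) - 1 := by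
        rw [Nat.card_Icc]
        have h1 : n + 1 - (k + 1) = n - k := by omega
        rw [h1]
        have h2 : n - k ≤ n - 1 := by omega
        calc ((n - k : ℕ) : ℝ) ≤ ((n - 1 : ℕ) : ℝ) := by exact_mod_cast h2
          _ = (n : ℝ) - 1 := by
              have : ((n - 1 : ℕ) : ℝ) = (n : ℝ) - 1 := by
                have : (1:ℕ) ≤ n := hn1
                push_cast [Nat.cast_sub this]
                ring
              exact this
      have hcardlt : ((Finset.Icc (k + 1) n).card : ℝ) * σ < 1 :=
        lt_of_le_of_lt (mul_le_mul_of_nonneg_right hcard hσ0) hσ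
      have hφb : ∀ i ∈ Finset.Icc (k + 1) n, |φ i - 1| ≤ σ := by
        intro i _
        have h1 : φ i - 1 = -(α i * b i) - b i * c (i - 1) - α i * b i * c (i - 1) := by
          rw [hφ]; ring
        rw [h1]
        have hab : |α i * b i| ≤ ε * ε := by
          rw [abs_mul]
          exact mul_le_mul (hα i) (hb i) (abs_nonneg _) (le_of_lt hε)
        have hbc : |b i * c (i - 1)| ≤ ε * ε := by
          rw [abs_mul]
          exact mul_le_mul (hb i) (hc _) (abs_nonneg _) (le_of_lt hε)
        have habc : |α i * b i * c (i - 1)| ≤ ε * ε * ε := by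
          rw [abs_mul]
          exact mul_le_mul hab (hc _) (abs_nonneg _) (by positivity)
        calc |-(α i * b i) - b i * c (i - 1) - α i * b i * c (i - 1)|
            ≤ |α i * b i| + |b i * c (i - 1)| + |α i * b i * c (i - 1)| := by
              have t1 := abs_add_le (-(α i * b i) - b i * c (i - 1)) (-(α i * b i * c (i - 1)))
              have t2 := abs_add_le (-(α i * b i)) (-(b i * c (i - 1)))
              simp only [abs_neg] at t1 t2
              calc |-(α i * b i) - b i * c (i - 1) - α i * b i * c (i - 1)|
                  = |(-(α i * b i) - b i * c (i - 1)) + -(α i * b i * c (i - 1))| := by ring_nf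
                _ ≤ |-(α i * b i) - b i * c (i - 1)| + |α i * b i * c (i - 1)| := t1
                _ = |(-(α i * b i)) + (-(b i * c (i - 1)))| + |α i * b i * c (i - 1)| := by ring_nf
                _ ≤ |α i * b i| + |b i * c (i - 1)| + |α i * b i * c (i - 1)| := by linarith [t2]
          _ ≤ σ := by rw [hσdef]; nlinarith
      have hprod := csd6_prod_err σ hσ0 φ (Finset.Icc (k + 1) n) hφb hcardlt
      have hprodδ : |∏ i ∈ Finset.Icc (k + 1) n, φ i - 1| ≤ δ := by
        refine le_trans hprod ?_
        rw [hδdef]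
        exact csd6_div_mono (mul_nonneg (Nat.cast_nonneg _) hσ0)
          (mul_le_mul_of_nonneg_right hcard hσ0) hσ
      set P := ∏ i ∈ Finset.Icc (k + 1) n, φ i with hPdef
      have hsplit : P * (1 - α k * b k) - 1 = (P - 1) * (1 - α k * b k) - α k * b k := by ring
      have hab : |α k * b k| ≤ ε ^ 2 := by
        rw [abs_mul]
        calc |α k| * |b k| ≤ ε * ε := mul_le_mul (hα k) (hb k) (abs_nonneg _) (le_of_lt hε)
          _ = ε ^ 2 := by ring
      have h1ab : |1 - α k * b k| ≤ 1 + ε ^ 2 := by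
        calc |1 - α k * b k| ≤ |(1:ℝ)| + |α k * b k| := by
              have := abs_sub (1:ℝ) (α k * b k)
              exact abs_sub _ _
          _ ≤ 1 + ε ^ 2 := by rw [abs_one]; linarith
      calc |P * (1 - α k * b k) - 1|
          = |(P - 1) * (1 - α k * b k) + (-(α k * b k))| := by rw [hsplit]; ring_nf
        _ ≤ |(P - 1) * (1 - α k * b k)| + |α k * b k| := by
            have := abs_add_le ((P - 1) * (1 - α k * b k)) (-(α k * b k))
            simpa using this
        _ = |P - 1| * |1 - α k * b k| + |α k * b k| := by rw [abs_mul]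
        _ ≤ δ * (1 + ε ^ 2) + ε ^ 2 := by
            have := mul_le_mul hprodδ h1ab (abs_nonneg _) hδ0
            linarith
        _ = ε ^ 2 + δ * (1 + ε ^ 2) := by ring
    -- assemble
    have hdiff : s n + e n - ∑ k ∈ Finset.Icc 1 n, x k =
        ∑ k ∈ Finset.Icc 1 n, ((∏ i ∈ Finset.Icc (k + 1) n, φ i) * (1 - α k * b k) - 1) * x k := by
      rw [keyn, ← Finset.sum_sub_distrib]
      apply Finset.sum_congr rfl
      intro k _
      ring
    rw [hdiff]
    calc |∑ k ∈ Finset.Icc 1 n, ((∏ i ∈ Finset.Icc (k + 1) n, φ i) * (1 - α k * b k) - 1) * x k|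
        ≤ ∑ k ∈ Finset.Icc 1 n, |((∏ i ∈ Finset.Icc (k + 1) n, φ i) * (1 - α k * b k) - 1) * x k| :=
          Finset.abs_sum_le_sum_abs _ _
      _ ≤ ∑ k ∈ Finset.Icc 1 n, (ε ^ 2 + δ * (1 + ε ^ 2)) * |x k| := by
          apply Finset.sum_le_sum
          intro k hk
          rw [abs_mul]
          exact mul_le_mul_of_nonneg_right (hterm k hk) (abs_nonneg _)
      _ = ε ^ 2 * ∑ k ∈ Finset.Icc 1 n, |x k| + δ * (1 + ε ^ 2) * ∑ k ∈ Finset.Icc 1 n, |x k| := by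
          rw [Finset.mul_sum, Finset.mul_sum, ← Finset.sum_add_distrib]
          apply Finset.sum_congr rfl
          intro k _
          ring
end

section
/- For the triple-6op-compensated recursive summation with per-step relative errors α_i, β_i, γ_i, η_i (all bounded by ε, η_0 = 0), the exact identity s_n + e_n = Σ_{k=1}^n [∏_{i=k+1}^n (1 − γ_i β_i + γ_i α_i η_{i-1} + γ_i β_i α_i η_{i-1})] (1 − γ_k α_k − γ_k β_k − γ_k β_k α_k) x_k holds. -/
/-- exact error characterization of the triple-6op-compensated
recursive summation. -/
theorem compensated_sum_triple_6op_characterization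
    (n : ℕ) (ε : ℝ) (hε : 0 < ε)
    (x y u t v w s e α b c η : ℕ → ℝ)
    (hα : ∀ i, |α i| ≤ ε) (hb : ∀ i, |b i| ≤ ε) (hc : ∀ i, |c i| ≤ ε)
    (hη : ∀ i, |η i| ≤ ε) (hη0 : η 0 = 0)
    (hs0 : s 0 = 0) (he0 : e 0 = 0)
    (hy : ∀ i, 1 ≤ i → i ≤ n → y i = (1 + α i) * (e (i - 1) + x i))
    (hu : ∀ i, 1 ≤ i → i ≤ n → u i = -(α i) * (e (i - 1) + x i))
    (ht : ∀ i, 1 ≤ i → i ≤ n → t i = (1 + b i) * (s (i - 1) + y i))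
    (hv : ∀ i, 1 ≤ i → i ≤ n → v i = -(b i) * (s (i - 1) + y i))
    (hw : ∀ i, 1 ≤ i → i ≤ n → w i = (1 + c i) * (u i + v i))
    (hs : ∀ i, 1 ≤ i → i ≤ n → s i = (1 + η i) * (t i + w i))
    (he : ∀ i, 1 ≤ i → i ≤ n → e i = -(η i) * (t i + w i)) :
    s n + e n = ∑ k ∈ Finset.Icc 1 n,
      (∏ i ∈ Finset.Icc (k + 1) n,
        (1 - c i * b i + c i * α i * η (i - 1) + c i * b i * α i * η (i - 1))) *
      ((1 - c k * α k - c k * b k - c k * b k * α k) * x k) := by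
  induction n with
  | zero => simp [hs0, he0]
  | succ n ih =>
    have ih' := ih (fun i h1 h2 => hy i h1 (h2.trans (Nat.le_succ n)))
      (fun i h1 h2 => hu i h1 (h2.trans (Nat.le_succ n)))
      (fun i h1 h2 => ht i h1 (h2.trans (Nat.le_succ n)))
      (fun i h1 h2 => hv i h1 (h2.trans (Nat.le_succ n)))
      (fun i h1 h2 => hw i h1 (h2.trans (Nat.le_succ n)))
      (fun i h1 h2 => hs i h1 (h2.trans (Nat.le_succ n)))
      (fun i h1 h2 => he i h1 (h2.trans (Nat.le_succ n)))
    have hen : e n = -(η n) * (s n + e n) := by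
      rcases Nat.eq_zero_or_pos n with h0 | h0
      · subst h0; simp [he0, hs0, hη0]
      · have h1 := he n h0 (Nat.le_succ n)
        have h2 := hs n h0 (Nat.le_succ n)
        rw [h1, h2]; ring
    have hsn : s n = (1 + η n) * (s n + e n) := by
      linear_combination -hen
    have hstep : s (n + 1) + e (n + 1) =
        (1 - c (n+1) * b (n+1) + c (n+1) * α (n+1) * η n
          + c (n+1) * b (n+1) * α (n+1) * η n) * (s n + e n)
        + (1 - c (n+1) * α (n+1) - c (n+1) * b (n+1)
          - c (n+1) * b (n+1) * α (n+1)) * x (n+1) := by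
      have hle : 1 ≤ n + 1 := by omega
      have h1 := hy (n+1) hle le_rfl
      have h2 := hu (n+1) hle le_rfl
      have h3 := ht (n+1) hle le_rfl
      have h4 := hv (n+1) hle le_rfl
      have h5 := hw (n+1) hle le_rfl
      have h6 := hs (n+1) hle le_rfl
      have h7 := he (n+1) hle le_rfl
      simp only [Nat.add_sub_cancel] at h1 h2 h3 h4 h5
      rw [h6, h7, h5, h3, h4, h2, h1]
      linear_combination (-(c (n+1) * α (n+1) + c (n+1) * b (n+1) * α (n+1))) * hen
    rw [hstep, ih', Finset.sum_Icc_succ_top (by omega : 1 ≤ n + 1)]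
    have hempty : Finset.Icc (n + 1 + 1) (n + 1) = (∅ : Finset ℕ) := by
      apply Finset.Icc_eq_empty; omega
    rw [hempty, Finset.prod_empty, one_mul, Finset.mul_sum]
    congr 1
    apply Finset.sum_congr rfl
    intro k hk
    have hk' : k + 1 ≤ n + 1 := by
      have := (Finset.mem_Icc.mp hk).2; omega
    rw [Finset.prod_Icc_succ_top hk']
    simp only [Nat.add_sub_cancel]
    ring
end
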